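/- arXiv:1705.07827 — 8 statements merged into one kernel-verified Lean document; each statement's English description precedes it below -/
import Mathlib

section
/- Let d ≥ 1 be an integer. A sequence (c_n)_{n≥0} of complex numbers is oscillating of order d if and only if for every integer a ≥ 1 and every integer b ≥ 0, the arithmetic subsequence (c_{an+b})_{n≥0} is oscillating of order d. -/
/-!
Write `e(x) = exp(2πix)`. Since `a⁻¹ ∑_{j<a} e(jt/a)` is the indicator of `a ∣ t`,
`∑_{n<N} c(an+b) e(P n) = a⁻¹ ∑_{j<a} ∑_{t<aN} c(b+t) e(Q_j(b+t))` with
`Q_j(x) = P((x-b)/a) + j(x-b)/a`. As `d ≥ 1`, each `Q_j` has degree at most `d`, so each inner sum,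
the difference of the Weyl sums of `c` against `Q_j` of lengths `b + aN` and `b`, is `o(N)`.
The converse is the case `a = 1`, `b = 0`.
-/

open Filter Finset

/-- A sequence `(c n)` of complex numbers is oscillating of order `d`. -/
def OscillatingOfOrder (c : ℕ → ℂ) (d : ℕ) : Prop :=
  ∀ P : Polynomial ℝ, P.natDegree ≤ d →
    Tendsto (fun N : ℕ =>
        (N : ℂ)⁻¹ * ∑ n ∈ Finset.range N,
          c n * Complex.exp (2 * Real.pi * Complex.I * (P.eval (n : ℝ))))
      atTop (nhds 0)

open Asymptotics Polynomial Complex Real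

theorem IsPrimitiveRoot.geom_sum_pow_eq_ite {R : Type*} [CommRing R] [IsDomain R] {ζ : R}
    {a : ℕ} (hζ : IsPrimitiveRoot ζ a) (t : ℕ) :
    ∑ j ∈ range a, (ζ ^ t) ^ j = if a ∣ t then (a : R) else 0 := by
  split_ifs with hat
  · simp [(hζ.pow_eq_one_iff_dvd t).mpr hat]
  · have hne : ζ ^ t - 1 ≠ 0 := sub_ne_zero.mpr fun h => hat ((hζ.pow_eq_one_iff_dvd t).mp h)
    refine mul_right_cancel₀ hne ?_
    rw [geom_sum_mul, ← pow_mul, mul_comm, pow_mul, hζ.pow_eq_one, one_pow, sub_self, zero_mul]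

theorem Finset.sum_range_mul_ite_dvd {M : Type*} [AddCommMonoid M] {a : ℕ} (ha : 0 < a)
    (f : ℕ → M) (N : ℕ) :
    ∑ t ∈ range (a * N), (if a ∣ t then f t else 0) = ∑ n ∈ range N, f (a * n) := by
  have hmul : (range (a * N)).filter (a ∣ ·) = (range N).image (a * ·) := by
    ext t
    simp only [mem_filter, mem_range, mem_image]
    constructor
    · rintro ⟨ht, n, rfl⟩
      exact ⟨n, Nat.lt_of_mul_lt_mul_left ht, rfl⟩
    · rintro ⟨n, hn, rfl⟩
      exact ⟨Nat.mul_lt_mul_of_pos_left hn ha, dvd_mul_right a n⟩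
  rw [← sum_filter, hmul, sum_image fun _ _ _ _ h => Nat.eq_of_mul_eq_mul_left ha h]

theorem isLittleO_sum_range_mul_add {f : ℕ → ℂ} {a : ℕ} (ha : 0 < a) (b : ℕ)
    (hf : (fun M => ∑ m ∈ range M, f m) =o[atTop] (fun M => (M : ℂ))) :
    (fun N => ∑ t ∈ range (a * N), f (b + t)) =o[atTop] (fun N => (N : ℂ)) := by
  have hlin : Tendsto (fun N => b + a * N) atTop atTop :=
    tendsto_atTop_mono (fun N => show N ≤ b + a * N by nlinarith) tendsto_id
  have hnorm : Tendsto (norm ∘ fun N : ℕ => (N : ℂ)) atTop atTop := by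
    simpa [Function.comp_def] using tendsto_natCast_atTop_atTop
  have hbig : (fun N : ℕ => ((b + a * N : ℕ) : ℂ)) =O[atTop] (fun N => (N : ℂ)) := by
    push_cast
    refine IsBigO.add ?_ (isBigO_const_mul_self _ _ _)
    exact (isLittleO_const_left.mpr (Or.inr hnorm)).isBigO
  have htail : (fun N => ∑ m ∈ range (b + a * N), f m) =o[atTop] (fun N => (N : ℂ)) :=
    (hf.comp_tendsto hlin).trans_isBigO hbig
  have hhead : (fun _ : ℕ => ∑ m ∈ range b, f m) =o[atTop] (fun N => (N : ℂ)) :=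
    isLittleO_const_left.mpr (Or.inr hnorm)
  refine (htail.sub hhead).congr_left fun N => ?_
  rw [sum_range_add, add_sub_cancel_left]

/-- On `b + a n` it takes the value `P n + j n`. -/
noncomputable def twistedRescale (P : ℝ[X]) (a b j : ℕ) : ℝ[X] :=
  P.comp (C (a : ℝ)⁻¹ * (X - C (b : ℝ))) + C ((j : ℝ) / a) * (X - C (b : ℝ))

theorem twistedRescale_eval_add (P : ℝ[X]) (a b j t : ℕ) :
    (twistedRescale P a b j).eval ((b + t : ℕ) : ℝ) = P.eval ((t : ℝ) / a) + j * t / a := by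
  simp only [twistedRescale, eval_add, eval_comp, eval_mul, eval_C, eval_sub, eval_X]
  push_cast
  ring_nf

theorem natDegree_twistedRescale_le {P : ℝ[X]} {d : ℕ} (hd : 1 ≤ d) (hP : P.natDegree ≤ d)
    (a b j : ℕ) : (twistedRescale P a b j).natDegree ≤ d := by
  have hlin : ∀ r : ℝ, (C r * (X - C (b : ℝ))).natDegree ≤ 1 := fun r =>
    (natDegree_C_mul_le _ _).trans (natDegree_X_sub_C _).le
  refine (natDegree_add_le _ _).trans (max_le ?_ ((hlin _).trans hd))
  calc (P.comp (C (a : ℝ)⁻¹ * (X - C (b : ℝ)))).natDegree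
      ≤ P.natDegree * (C (a : ℝ)⁻¹ * (X - C (b : ℝ))).natDegree := natDegree_comp_le
    _ ≤ d * 1 := Nat.mul_le_mul hP (hlin _)
    _ = d := mul_one d

noncomputable def weylSum (c : ℕ → ℂ) (P : ℝ[X]) (N : ℕ) : ℂ :=
  ∑ n ∈ range N, c n * cexp (2 * π * I * P.eval (n : ℝ))

theorem oscillatingOfOrder_iff_isLittleO (c : ℕ → ℂ) (d : ℕ) :
    OscillatingOfOrder c d ↔
      ∀ P : ℝ[X], P.natDegree ≤ d → weylSum c P =o[atTop] (fun N => (N : ℂ)) := by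
  refine forall₂_congr fun P _ => ?_
  rw [isLittleO_iff_tendsto fun N hN => by simp_all [weylSum]]
  simp only [weylSum, div_eq_inv_mul]

theorem natCast_mul_weylSum_arith_subseq (c : ℕ → ℂ) (P : ℝ[X]) {a : ℕ} (ha : 0 < a)
    (b N : ℕ) :
    (a : ℂ) * weylSum (fun n => c (a * n + b)) P N =
      ∑ j ∈ range a, ∑ t ∈ range (a * N),
        c (b + t) * cexp (2 * π * I * (twistedRescale P a b j).eval ((b + t : ℕ) : ℝ)) := by
  set ζ := cexp (2 * π * I / a)
  have hζ : IsPrimitiveRoot ζ a := isPrimitiveRoot_exp a ha.ne'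
  have hphase : ∀ j t : ℕ, cexp (2 * π * I * (twistedRescale P a b j).eval ((b + t : ℕ) : ℝ)) =
      cexp (2 * π * I * P.eval ((t : ℝ) / a)) * (ζ ^ t) ^ j := by
    intro j t
    rw [twistedRescale_eval_add, ← pow_mul, ← Complex.exp_nat_mul, ← Complex.exp_add]
    push_cast
    ring_nf
  have hdiv : ∀ n : ℕ, ((a * n : ℕ) : ℝ) / a = n := fun n => by
    push_cast
    field_simp
  calc (a : ℂ) * weylSum (fun n => c (a * n + b)) P N
      = ∑ n ∈ range N,
          a * (c (b + a * n) * cexp (2 * π * I * P.eval (((a * n : ℕ) : ℝ) / a))) := by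
        simp only [weylSum, mul_sum, hdiv, add_comm b]
    _ = ∑ t ∈ range (a * N),
          if a ∣ t then a * (c (b + t) * cexp (2 * π * I * P.eval ((t : ℝ) / a))) else 0 :=
        (sum_range_mul_ite_dvd ha
          (fun t => a * (c (b + t) * cexp (2 * π * I * P.eval ((t : ℝ) / a)))) N).symm
    _ = ∑ t ∈ range (a * N),
          c (b + t) * cexp (2 * π * I * P.eval ((t : ℝ) / a)) * ∑ j ∈ range a, (ζ ^ t) ^ j := by
        refine sum_congr rfl fun t _ => ?_
        rw [hζ.geom_sum_pow_eq_ite]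
        split_ifs <;> ring
    _ = _ := by
        rw [sum_comm]
        refine sum_congr rfl fun t _ => ?_
        rw [mul_sum]
        exact sum_congr rfl fun j _ => by rw [hphase]; ring

theorem oscillating_iff_arith_subseq (d : ℕ) (hd : 1 ≤ d) (c : ℕ → ℂ) :
    OscillatingOfOrder c d ↔
      ∀ a : ℕ, 1 ≤ a → ∀ b : ℕ, OscillatingOfOrder (fun n => c (a * n + b)) d := by
  refine ⟨fun hc a ha b => ?_, fun h => by simpa using h 1 le_rfl 0⟩
  rw [oscillatingOfOrder_iff_isLittleO] at hc ⊢
  intro P hP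
  have htwist : ∀ j ∈ range a, (fun N => ∑ t ∈ range (a * N), c (b + t) *
      cexp (2 * π * I * (twistedRescale P a b j).eval ((b + t : ℕ) : ℝ))) =o[atTop]
        (fun N => (N : ℂ)) := fun j _ =>
    isLittleO_sum_range_mul_add ha b (hc _ (natDegree_twistedRescale_le hd hP a b j))
  refine ((IsLittleO.fun_sum htwist).const_mul_left (a : ℂ)⁻¹).congr_left fun N => ?_
  rw [← natCast_mul_weylSum_arith_subseq c P ha,
    inv_mul_cancel_left₀ (Nat.cast_ne_zero.mpr (by omega))]
end

section
/- Let d ≥ 1 be an integer. A sequence (c_n)_{n≥0} of complex numbers is oscillating of order d if and only if for every real polynomial P of degree at most d and every polynomial Q with rational coefficients (of arbitrary degree), lim_{N→∞} (1/N) ∑_{n=0}^{N-1} c_n e^{2πi (P(n)+Q(n))} = 0. -/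
open Filter Finset

lemma aux_eval_int (Q : Polynomial ℚ) (q : ℕ) (hden : ∀ i, (Q.coeff i).den ∣ q)
    (m t : ℕ) : ∃ z : ℤ, Q.eval ((m + q * t : ℕ) : ℚ) = Q.eval (m : ℚ) + z := by
  set n : ℕ := m + q * t with hn
  have key : Q.eval (n : ℚ) - Q.eval (m : ℚ) ∈ (Int.castRingHom ℚ).range := by
    rw [Polynomial.eval_eq_sum_range (x := (n : ℚ)), Polynomial.eval_eq_sum_range (x := (m : ℚ)),
      ← Finset.sum_sub_distrib]
    apply Subring.sum_mem
    intro i _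
    rw [← mul_sub]
    -- divisibility in ℤ
    have hdvd : (q : ℤ) ∣ (n : ℤ) ^ i - (m : ℤ) ^ i := by
      have h1 : (n : ℤ) - m ∣ (n : ℤ) ^ i - m ^ i := sub_dvd_pow_sub_pow _ _ i
      have h2 : (n : ℤ) - m = q * t := by push_cast [hn]; ring
      exact dvd_trans ⟨t, h2.symm ▸ rfl⟩ h1
    obtain ⟨w, hw⟩ := hdvd
    obtain ⟨s, hs⟩ := hden i
    refine ⟨(Q.coeff i).num * (s * w), ?_⟩
    have hcast : ((n : ℚ) ^ i - (m : ℚ) ^ i) = ((q : ℚ) * w) := by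
      exact_mod_cast congrArg (Int.cast : ℤ → ℚ) hw
    simp only [Int.castRingHom, RingHom.coe_mk, MonoidHom.coe_mk, OneHom.coe_mk]
    rw [hcast, hs]
    push_cast
    rw [show Q.coeff i * (((Q.coeff i).den : ℚ) * (s:ℚ) * (w:ℚ)) =
      (Q.coeff i * ((Q.coeff i).den : ℚ)) * ((s:ℚ) * w) by ring, Rat.mul_den_eq_num]
  obtain ⟨z, hz⟩ := key
  refine ⟨z, ?_⟩
  have : (z : ℚ) = Q.eval (n : ℚ) - Q.eval (m : ℚ) := hz
  linarith



lemma aux_ortho (q : ℕ) (hq : q ≠ 0) (k : ℤ) :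
    ∑ j ∈ Finset.range q, (Complex.exp (2 * Real.pi * Complex.I / q) ^ k) ^ j =
      if (q : ℤ) ∣ k then (q : ℂ) else 0 := by
  set ζ := Complex.exp (2 * Real.pi * Complex.I / q) with hζ
  have hprim : IsPrimitiveRoot ζ q := Complex.isPrimitiveRoot_exp q hq
  by_cases h : (q : ℤ) ∣ k
  · rw [if_pos h, (hprim.zpow_eq_one_iff_dvd k).mpr h]
    simp
  · rw [if_neg h]
    have hne : ζ ^ k ≠ 1 := fun hc => h ((hprim.zpow_eq_one_iff_dvd k).mp hc)
    rw [geom_sum_eq hne]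
    have : (ζ ^ k) ^ q = 1 := by
      rw [← zpow_natCast, ← zpow_mul, mul_comm, zpow_mul, zpow_natCast, hprim.pow_eq_one,
        one_zpow]
    rw [this, sub_self, zero_div]

lemma aux_expand (q : ℕ) (hq : q ≠ 0) (f : ℕ → ℂ) (hf : ∀ n, f n = f (n % q)) (n : ℕ) :
    f n = ∑ j ∈ Finset.range q,
      ((q : ℂ)⁻¹ * ∑ m ∈ Finset.range q, f m *
         (Complex.exp (2 * Real.pi * Complex.I / q) ^ (-(m : ℤ))) ^ j) *
      (Complex.exp (2 * Real.pi * Complex.I / q) ^ ((n : ℤ))) ^ j := by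
  set ζ := Complex.exp (2 * Real.pi * Complex.I / q) with hζ
  have hζne : ζ ≠ 0 := Complex.exp_ne_zero _
  have hcomb : ∀ (j m : ℕ), (ζ ^ (-(m : ℤ))) ^ j * (ζ ^ ((n : ℤ))) ^ j
      = (ζ ^ ((n : ℤ) - m)) ^ j := by
    intro j m
    rw [← mul_pow, ← zpow_add₀ hζne, neg_add_eq_sub]
  symm
  calc (∑ j ∈ Finset.range q,
      ((q : ℂ)⁻¹ * ∑ m ∈ Finset.range q, f m * (ζ ^ (-(m : ℤ))) ^ j) * (ζ ^ ((n : ℤ))) ^ j)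
      = (q : ℂ)⁻¹ * ∑ m ∈ Finset.range q, f m * ∑ j ∈ Finset.range q, (ζ ^ ((n : ℤ) - m)) ^ j := by
        simp only [Finset.sum_mul, Finset.mul_sum]
        rw [Finset.sum_comm]
        refine Finset.sum_congr rfl fun m _ => Finset.sum_congr rfl fun j _ => ?_
        rw [← hcomb j m]; ring
    _ = (q : ℂ)⁻¹ * (f (n % q) * q) := by
        congr 1
        rw [Finset.sum_eq_single_of_mem (n % q) (Finset.mem_range.mpr (Nat.mod_lt _ (Nat.pos_of_ne_zero hq)))]
        · rw [aux_ortho q hq, if_pos]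
          rw [show ((n % q : ℕ) : ℤ) = (n : ℤ) % (q : ℤ) by push_cast; rfl]
          exact Int.dvd_self_sub_of_emod_eq rfl
        · intro m hm hmne
          rw [aux_ortho q hq, if_neg, mul_zero]
          intro hdvd
          have h1 : (n : ℤ) % q = (m : ℤ) % q :=
            Int.emod_eq_emod_iff_emod_sub_eq_zero.mpr (Int.emod_eq_zero_of_dvd hdvd)
          apply hmne
          have h2 : ((n % q : ℕ) : ℤ) = ((m % q : ℕ) : ℤ) := by push_cast; exact h1
          have h3 : n % q = m % q := Int.ofNat.inj h2
          rw [Nat.mod_eq_of_lt (Finset.mem_range.mp hm)] at h3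
          exact h3.symm
    _ = f n := by
        rw [← hf n, mul_comm (f n), ← mul_assoc, inv_mul_cancel₀ (Nat.cast_ne_zero.mpr hq), one_mul]


theorem oscillating_iff_rational_perturbation (d : ℕ) (hd : 1 ≤ d) (c : ℕ → ℂ) :
    OscillatingOfOrder c d ↔
      ∀ P : Polynomial ℝ, P.natDegree ≤ d → ∀ Q : Polynomial ℚ,
        Tendsto (fun N : ℕ =>
            (N : ℂ)⁻¹ * ∑ n ∈ Finset.range N,
              c n * Complex.exp (2 * Real.pi * Complex.I *
                (P.eval (n : ℝ) + (↑(Q.eval ((n : ℕ) : ℚ)) : ℝ))))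
          atTop (nhds 0) := by
  constructor
  · intro h P hP Q
    set q : ℕ := ∏ i ∈ Q.support, (Q.coeff i).den with hqdef
    have hq : q ≠ 0 := by
      rw [hqdef]
      exact Finset.prod_ne_zero_iff.mpr fun i _ => (Q.coeff i).den_nz
    have hden : ∀ i, (Q.coeff i).den ∣ q := by
      intro i
      by_cases hi : i ∈ Q.support
      · exact Finset.dvd_prod_of_mem _ hi
      · rw [Polynomial.notMem_support_iff.mp hi]
        simp
    set ζ : ℂ := Complex.exp (2 * Real.pi * Complex.I / q) with hζdef
    set f : ℕ → ℂ :=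
      fun n => Complex.exp (2 * Real.pi * Complex.I * (((Q.eval (n : ℚ) : ℚ) : ℝ) : ℂ)) with hfdef
    have hper : ∀ n, f n = f (n % q) := by
      intro n
      obtain ⟨z, hz⟩ := aux_eval_int Q q hden (n % q) (n / q)
      rw [Nat.mod_add_div] at hz
      simp only [hfdef]
      rw [hz]
      push_cast
      rw [mul_add, Complex.exp_add, mul_comm ((2 : ℂ) * Real.pi * Complex.I) (z : ℂ),
        Complex.exp_int_mul_two_pi_mul_I, mul_one]
    set b : ℕ → ℂ :=
      fun j => (q : ℂ)⁻¹ * ∑ m ∈ Finset.range q, f m * (ζ ^ (-(m : ℤ))) ^ j with hbdef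
    set Pb : ℕ → Polynomial ℝ :=
      fun j => P + Polynomial.C ((j : ℝ) / q) * Polynomial.X with hPbdef
    have hdeg : ∀ j, (Pb j).natDegree ≤ d := by
      intro j
      refine le_trans (Polynomial.natDegree_add_le _ _) (max_le hP ?_)
      exact le_trans (le_trans (Polynomial.natDegree_C_mul_le _ _)
        Polynomial.natDegree_X_le) hd
    have hE : ∀ (j n : ℕ),
        Complex.exp (2 * Real.pi * Complex.I * (((Pb j).eval (n : ℝ) : ℝ) : ℂ)) =
          Complex.exp (2 * Real.pi * Complex.I * ((P.eval (n : ℝ) : ℝ) : ℂ)) *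
            (ζ ^ ((n : ℤ))) ^ j := by
      intro j n
      have heval : (Pb j).eval (n : ℝ) = P.eval (n : ℝ) + (j : ℝ) / q * n := by
        simp [hPbdef]
      rw [heval]
      push_cast
      rw [mul_add, Complex.exp_add]
      congr 1
      rw [hζdef, zpow_natCast, ← pow_mul, ← Complex.exp_nat_mul]
      congr 1
      have hq' : (q : ℂ) ≠ 0 := Nat.cast_ne_zero.mpr hq
      push_cast
      field_simp
    have heq : ∀ N : ℕ,
        (N : ℂ)⁻¹ * ∑ n ∈ Finset.range N,
            c n * Complex.exp (2 * Real.pi * Complex.I *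
              (P.eval (n : ℝ) + ((Q.eval ((n : ℕ) : ℚ) : ℚ) : ℝ))) =
          ∑ j ∈ Finset.range q, b j * ((N : ℂ)⁻¹ * ∑ n ∈ Finset.range N,
            c n * Complex.exp (2 * Real.pi * Complex.I * ((((Pb j).eval (n : ℝ)) : ℝ) : ℂ))) := by
      intro N
      have step1 : ∀ n : ℕ,
          c n * Complex.exp (2 * Real.pi * Complex.I *
            (P.eval (n : ℝ) + ((Q.eval ((n : ℕ) : ℚ) : ℚ) : ℝ))) =
          ∑ j ∈ Finset.range q, b j *
            (c n * Complex.exp (2 * Real.pi * Complex.I * ((((Pb j).eval (n : ℝ)) : ℝ) : ℂ))) := by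
        intro n
        have hsplit : Complex.exp (2 * Real.pi * Complex.I *
            (P.eval (n : ℝ) + ((Q.eval ((n : ℕ) : ℚ) : ℚ) : ℝ))) =
            Complex.exp (2 * Real.pi * Complex.I * ((P.eval (n : ℝ) : ℝ) : ℂ)) * f n := by
          simp only [hfdef]
          rw [← Complex.exp_add]
          congr 1
          push_cast
          ring
        rw [hsplit, aux_expand q hq f hper n, Finset.mul_sum, Finset.mul_sum]
        refine Finset.sum_congr rfl fun j _ => ?_
        rw [hE j n]
        simp only [hbdef]
        ring
      rw [Finset.sum_congr rfl fun n _ => step1 n]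
      simp only [Finset.mul_sum]
      rw [Finset.sum_comm]
      exact Finset.sum_congr rfl fun j _ => Finset.sum_congr rfl fun n _ => by ring
    have hlim := tendsto_finset_sum (Finset.range q)
      (fun j _ => Filter.Tendsto.const_mul (b j) (h (Pb j) (hdeg j)))
    simp only [mul_zero, Finset.sum_const_zero] at hlim
    exact hlim.congr fun N => (heq N).symm
  · intro h P hP
    have := h P hP 0
    simpa using this
end

section
/- Let d ≥ 2 be an integer and let α, β be irrational real numbers. The sequence c_n = e^{2πi (n^d α + n^{d-1} β)} is weakly oscillating of order d but is not oscillating of order d. In particular, for every d ≥ 2 there exist weakly oscillating sequences of order d which are not oscillating of order d. -/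
open Filter Finset

/-- A sequence `(c n)` of complex numbers is weakly oscillating of order `d`. -/
def WeaklyOscillatingOfOrder (c : ℕ → ℂ) (d : ℕ) : Prop :=
  ∀ k : ℕ, k ≤ d → ∀ t : ℝ, 0 ≤ t → t < 1 →
    Tendsto (fun N : ℕ =>
        (N : ℂ)⁻¹ * ∑ n ∈ Finset.range N,
          c n * Complex.exp (2 * Real.pi * Complex.I * ((n : ℝ) ^ k * t)))
      atTop (nhds 0)

/-! Weyl differencing: by van der Corput's inequality, `e(P(n))` has zero mean as soon as every
difference `e(P(n + k) - P(n))`, `k ≥ 1`, does; differencing lowers the degree and multiplies the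
leading coefficient by `k · deg P`, so an irrational leading coefficient reduces to the linear case,
a bounded geometric sum. If instead the leading coefficient is a rational `p / q`, then on each
residue class `n = q m + r` the top term is constant modulo `1` and the irrational subleading
coefficient takes over.

Twisting `c_n` by `e(n ^ k t)` leaves the coefficient `α` of `n ^ d` intact when `k < d` and the
coefficient `β` of `n ^ (d - 1)` intact when `k = d`, so `c` is weakly oscillating; twisting by
`e(-(n ^ d α + n ^ (d - 1) β))` gives the constant sequence `1`. -/

open Complex ComplexConjugate Topology

noncomputable def expTwoPiI (x : ℝ) : ℂ := Complex.exp (2 * Real.pi * I * x)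

lemma expTwoPiI_add (x y : ℝ) : expTwoPiI (x + y) = expTwoPiI x * expTwoPiI y := by
  rw [expTwoPiI, expTwoPiI, expTwoPiI, ← Complex.exp_add, ofReal_add, mul_add]

lemma norm_expTwoPiI (x : ℝ) : ‖expTwoPiI x‖ = 1 := by
  simp [expTwoPiI, Complex.norm_exp]

lemma conj_expTwoPiI (x : ℝ) : conj (expTwoPiI x) = expTwoPiI (-x) := by
  rw [expTwoPiI, expTwoPiI, ← Complex.exp_conj]
  simp [conj_ofReal, map_ofNat]

lemma expTwoPiI_intCast (k : ℤ) : expTwoPiI k = 1 := by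
  rw [expTwoPiI, ← Complex.exp_int_mul_two_pi_mul_I k]
  push_cast
  ring_nf

lemma expTwoPiI_mul_natCast (a : ℝ) (n : ℕ) : expTwoPiI (a * n) = expTwoPiI a ^ n := by
  rw [expTwoPiI, expTwoPiI, ← Complex.exp_nat_mul]
  push_cast
  ring_nf

lemma expTwoPiI_ne_one {a : ℝ} (ha : Irrational a) : expTwoPiI a ≠ 1 := by
  rw [expTwoPiI, Ne, Complex.exp_eq_one_iff]
  rintro ⟨n, hn⟩
  refine ha.ne_int n (ofReal_injective ?_)
  have h2πI : 2 * (Real.pi : ℂ) * I ≠ 0 := by simp [Real.pi_ne_zero]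
  push_cast
  exact mul_left_cancel₀ h2πI (by rw [hn]; ring)

def HasZeroMean (u : ℕ → ℂ) : Prop :=
  Tendsto (fun N : ℕ => (N : ℂ)⁻¹ * ∑ n ∈ range N, u n) atTop (𝓝 0)

lemma hasZeroMean_iff_norm {u : ℕ → ℂ} :
    HasZeroMean u ↔ Tendsto (fun N : ℕ => ‖∑ n ∈ range N, u n‖ / N) atTop (𝓝 0) := by
  rw [HasZeroMean, tendsto_zero_iff_norm_tendsto_zero]
  simp only [inv_mul_eq_div, norm_div, Complex.norm_natCast]

lemma HasZeroMean.const_mul {u : ℕ → ℂ} (hu : HasZeroMean u) (c : ℂ) :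
    HasZeroMean fun n => c * u n := by
  simpa [HasZeroMean, ← mul_sum, mul_left_comm] using Filter.Tendsto.const_mul c hu

lemma hasZeroMean_of_norm_sum_le {u : ℕ → ℂ} (C : ℝ) (h : ∀ N, ‖∑ n ∈ range N, u n‖ ≤ C) :
    HasZeroMean u := by
  rw [hasZeroMean_iff_norm]
  refine squeeze_zero (fun N => by positivity) (fun N => div_le_div_of_nonneg_right (h N)
    N.cast_nonneg) ?_
  exact tendsto_const_div_atTop_nhds_zero_nat C

lemma hasZeroMean_expTwoPiI_linear {a : ℝ} (ha : Irrational a) (b : ℝ) :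
    HasZeroMean fun n => expTwoPiI (a * n + b) := by
  have hne := expTwoPiI_ne_one ha
  refine hasZeroMean_of_norm_sum_le (2 / ‖expTwoPiI a - 1‖) fun N => ?_
  have hgeom : ∑ n ∈ range N, expTwoPiI (a * n + b) =
      expTwoPiI b * ((expTwoPiI a ^ N - 1) / (expTwoPiI a - 1)) := by
    simp only [expTwoPiI_add, expTwoPiI_mul_natCast, ← geom_sum_eq hne, mul_sum, mul_comm]
  rw [hgeom, norm_mul, norm_expTwoPiI, one_mul, norm_div]
  gcongr
  calc ‖expTwoPiI a ^ N - 1‖ ≤ ‖expTwoPiI a ^ N‖ + ‖(1 : ℂ)‖ := norm_sub_le _ _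
    _ = 2 := by rw [norm_pow, norm_expTwoPiI]; norm_num

lemma norm_sum_le_card_of_norm_le_one {ι E : Type*} [SeminormedAddCommGroup E] {f : ι → E}
    (hf : ∀ i, ‖f i‖ ≤ 1) (s : Finset ι) : ‖∑ i ∈ s, f i‖ ≤ #s := by
  simpa using norm_sum_le_of_le s fun i _ => hf i

section VanDerCorput

variable {u : ℕ → ℂ}

lemma norm_sum_range_shift_sub_le (hu : ∀ n, ‖u n‖ ≤ 1) (h N : ℕ) :
    ‖∑ n ∈ range N, u (n + h) - ∑ n ∈ range N, u n‖ ≤ 2 * h := by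
  have hsplit : ∑ n ∈ range N, u (n + h) - ∑ n ∈ range N, u n =
      ∑ n ∈ range h, u (N + n) - ∑ n ∈ range h, u n := by
    have h₁ := sum_range_add u h N
    have h₂ : ∑ n ∈ range (h + N), u n = ∑ n ∈ range N, u n + ∑ n ∈ range h, u (N + n) := by
      rw [Nat.add_comm h N]
      exact sum_range_add u N h
    simp only [add_comm _ h] at h₁ ⊢
    linear_combination h₂ - h₁
  rw [hsplit, two_mul]
  refine (norm_sub_le _ _).trans (add_le_add ?_ ?_) <;>
    simpa using norm_sum_le_card_of_norm_le_one (fun n => hu _) (range h)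

lemma norm_sum_shifted_correlation_le (hu : ∀ n, ‖u n‖ ≤ 1) (h c N : ℕ) :
    ‖∑ n ∈ range N, u (n + h + c) * conj (u (n + h))‖ ≤
      ‖∑ n ∈ range N, u (n + c) * conj (u n)‖ + 2 * h := by
  have hw : ∀ n, ‖u (n + c) * conj (u n)‖ ≤ 1 := fun n => by
    simpa using mul_le_one₀ (hu (n + c)) (norm_nonneg _) (hu n)
  have := norm_sum_range_shift_sub_le hw h N
  linarith [norm_le_norm_add_norm_sub' (∑ n ∈ range N, u (n + h + c) * conj (u (n + h)))
    (∑ n ∈ range N, u (n + c) * conj (u n))]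

lemma norm_sum_correlation_le (hu : ∀ n, ‖u n‖ ≤ 1) {H h h' : ℕ} (hh : h < H) (hh' : h' < H)
    (N : ℕ) :
    ‖∑ n ∈ range N, u (n + h) * conj (u (n + h'))‖ ≤ (if h = h' then N else 0) +
      (∑ k ∈ Ico 1 H, ‖∑ n ∈ range N, u (n + k) * conj (u n)‖ + 2 * H) := by
  wlog hle : h' ≤ h generalizing h h'
  · have hswap : ‖∑ n ∈ range N, u (n + h) * conj (u (n + h'))‖ =
        ‖∑ n ∈ range N, u (n + h') * conj (u (n + h))‖ := by
      rw [← Complex.norm_conj, map_sum]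
      simp [mul_comm]
    simpa [hswap, eq_comm] using this hh' hh (le_of_not_ge hle)
  obtain ⟨c, rfl⟩ := Nat.exists_eq_add_of_le hle
  have hcorr : 0 ≤ ∑ k ∈ Ico 1 H, ‖∑ n ∈ range N, u (n + k) * conj (u n)‖ :=
    sum_nonneg fun _ _ => norm_nonneg _
  rcases Nat.eq_zero_or_pos c with rfl | hc
  · have hdiag := norm_sum_le_card_of_norm_le_one (f := fun n => u (n + h') * conj (u (n + h')))
      (fun n => by simpa using mul_le_one₀ (hu _) (norm_nonneg _) (hu _)) (range N)
    simp only [add_zero, card_range, if_true] at hdiag ⊢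
    linarith
  · have hk : ‖∑ n ∈ range N, u (n + c) * conj (u n)‖ ≤
        ∑ k ∈ Ico 1 H, ‖∑ n ∈ range N, u (n + k) * conj (u n)‖ :=
      single_le_sum (f := fun k => ‖∑ n ∈ range N, u (n + k) * conj (u n)‖)
        (fun _ _ => norm_nonneg _) (mem_Ico.2 ⟨hc, by omega⟩)
    have hh'H : (h' : ℝ) ≤ H := by exact_mod_cast hh'.le
    simp only [← add_assoc, if_neg (show h' + c ≠ h' by omega)]
    linarith [norm_sum_shifted_correlation_le hu h' c N]

lemma sum_norm_sum_window_sq_le (H N : ℕ) :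
    ∑ n ∈ range N, ‖∑ h ∈ range H, u (n + h)‖ ^ 2 ≤
      ∑ h ∈ range H, ∑ h' ∈ range H, ‖∑ n ∈ range N, u (n + h) * conj (u (n + h'))‖ := by
  have hexpand : ((∑ n ∈ range N, ‖∑ h ∈ range H, u (n + h)‖ ^ 2 : ℝ) : ℂ) =
      ∑ h ∈ range H, ∑ h' ∈ range H, ∑ n ∈ range N, u (n + h) * conj (u (n + h')) := by
    simp only [ofReal_sum, ofReal_pow, ← mul_conj', map_sum, sum_mul_sum]
    rw [sum_comm]
    exact sum_congr rfl fun _ _ => sum_comm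
  calc ∑ n ∈ range N, ‖∑ h ∈ range H, u (n + h)‖ ^ 2
      ≤ ‖∑ h ∈ range H, ∑ h' ∈ range H, ∑ n ∈ range N, u (n + h) * conj (u (n + h'))‖ := by
        rw [← hexpand, norm_real, Real.norm_eq_abs]
        exact le_abs_self _
    _ ≤ _ := (norm_sum_le _ _).trans (sum_le_sum fun _ _ => norm_sum_le _ _)

lemma norm_mul_sum_sub_sum_window_le (hu : ∀ n, ‖u n‖ ≤ 1) (H N : ℕ) :
    ‖(H : ℂ) * ∑ n ∈ range N, u n - ∑ n ∈ range N, ∑ h ∈ range H, u (n + h)‖ ≤ 2 * H ^ 2 := by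
  have hconst : (H : ℂ) * ∑ n ∈ range N, u n = ∑ _h ∈ range H, ∑ n ∈ range N, u n := by simp
  rw [hconst, sum_comm (s := range N) (f := fun n h => u (n + h)), ← sum_sub_distrib]
  calc ‖∑ h ∈ range H, (∑ n ∈ range N, u n - ∑ n ∈ range N, u (n + h))‖
      ≤ ∑ h ∈ range H, (2 * H : ℝ) := by
        refine norm_sum_le_of_le _ fun h hh => ?_
        rw [norm_sub_rev]
        refine (norm_sum_range_shift_sub_le hu h N).trans ?_
        gcongr
        exact (mem_range.1 hh).le
    _ = 2 * H ^ 2 := by simp; ring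

lemma vanDerCorput_inequality (hu : ∀ n, ‖u n‖ ≤ 1) (H N : ℕ) :
    (H * ‖∑ n ∈ range N, u n‖) ^ 2 ≤ 2 * N * (H * N + H ^ 2 *
      (∑ k ∈ Ico 1 H, ‖∑ n ∈ range N, u (n + k) * conj (u n)‖ + 2 * H)) + 8 * H ^ 4 := by
  set T := ∑ n ∈ range N, ∑ h ∈ range H, u (n + h)
  have hCS : ‖T‖ ^ 2 ≤ N * ∑ n ∈ range N, ‖∑ h ∈ range H, u (n + h)‖ ^ 2 := by
    calc ‖T‖ ^ 2 ≤ (∑ n ∈ range N, ‖∑ h ∈ range H, u (n + h)‖) ^ 2 := by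
          exact pow_le_pow_left₀ (norm_nonneg _) (norm_sum_le _ _) 2
      _ ≤ _ := by
          simpa using sq_sum_le_card_mul_sum_sq (s := range N)
            (f := fun n => ‖∑ h ∈ range H, u (n + h)‖)
  have hdiag : ∑ h ∈ range H, ∑ h' ∈ range H,
      ‖∑ n ∈ range N, u (n + h) * conj (u (n + h'))‖ ≤ H * N + H ^ 2 *
        (∑ k ∈ Ico 1 H, ‖∑ n ∈ range N, u (n + k) * conj (u n)‖ + 2 * H) := by
    refine (sum_le_sum fun h hh => sum_le_sum fun h' hh' =>
      norm_sum_correlation_le hu (mem_range.1 hh) (mem_range.1 hh') N).trans (le_of_eq ?_)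
    simp +contextual [sum_add_distrib, sum_ite_eq]
    ring
  have hwindow : H * ‖∑ n ∈ range N, u n‖ ≤ ‖T‖ + 2 * H ^ 2 := by
    have := (norm_sub_norm_le _ _).trans (norm_mul_sum_sub_sum_window_le hu H N)
    rw [norm_mul, Complex.norm_natCast] at this
    linarith
  have hT := hCS.trans (mul_le_mul_of_nonneg_left
    ((sum_norm_sum_window_sq_le H N).trans hdiag) N.cast_nonneg)
  nlinarith [sq_nonneg (‖T‖ - 2 * (H : ℝ) ^ 2), norm_nonneg T,
    mul_nonneg (H.cast_nonneg : (0 : ℝ) ≤ H) (norm_nonneg (∑ n ∈ range N, u n))]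

theorem hasZeroMean_of_hasZeroMean_correlations (hu : ∀ n, ‖u n‖ ≤ 1)
    (hcorr : ∀ k, 0 < k → HasZeroMean fun n => u (n + k) * conj (u n)) : HasZeroMean u := by
  rw [hasZeroMean_iff_norm, Metric.tendsto_atTop]
  intro ε hε
  obtain ⟨H, hH⟩ := exists_nat_gt (4 / ε ^ 2)
  have hHpos : (0 : ℝ) < H := (by positivity : (0 : ℝ) < 4 / ε ^ 2).trans hH
  have key := vanDerCorput_inequality hu H
  set corr : ℕ → ℝ := fun N => ∑ k ∈ Ico 1 H, ‖∑ n ∈ range N, u (n + k) * conj (u n)‖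
  have hcorr : Tendsto (fun N : ℕ => corr N / N) atTop (𝓝 0) := by
    simpa [corr, sum_div] using tendsto_finsetSum (Ico 1 H)
      fun k hk => hasZeroMean_iff_norm.1 (hcorr k (mem_Ico.1 hk).1)
  set f : ℕ → ℝ := fun N => 2 / H + 2 * (corr N / N) + 4 * H * (N : ℝ)⁻¹ + 8 * H ^ 2 * (N : ℝ)⁻¹ ^ 2
  have hf : Tendsto f atTop (𝓝 (2 / H)) := by
    have hinv := tendsto_inv_atTop_zero.comp (tendsto_natCast_atTop_atTop (R := ℝ))
    convert (((tendsto_const_nhds (x := 2 / (H : ℝ))).add (hcorr.const_mul 2)).add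
      (hinv.const_mul (4 * (H : ℝ)))).add ((hinv.pow 2).const_mul (8 * (H : ℝ) ^ 2)) using 2 <;>
      simp [f]
  have h2H : 2 / (H : ℝ) < ε ^ 2 := by
    rw [div_lt_iff₀ hHpos]
    rw [div_lt_iff₀ (by positivity)] at hH
    linarith
  obtain ⟨N₀, hN₀⟩ := eventually_atTop.1 (hf.eventually (gt_mem_nhds h2H))
  refine ⟨max N₀ 1, fun N hN => ?_⟩
  have hNpos : (0 : ℝ) < N := by exact_mod_cast (le_of_max_le_right hN)
  have hsq : (‖∑ n ∈ range N, u n‖ / N) ^ 2 ≤ f N := by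
    rw [div_pow, div_le_iff₀ (by positivity)]
    refine le_of_mul_le_mul_right ?_ (by positivity : (0 : ℝ) < H ^ 2)
    calc ‖∑ n ∈ range N, u n‖ ^ 2 * H ^ 2 = (H * ‖∑ n ∈ range N, u n‖) ^ 2 := by ring
      _ ≤ _ := key N
      _ = f N * N ^ 2 * H ^ 2 := by
        simp only [f]
        field_simp
        ring
  rw [Real.dist_eq, sub_zero]
  exact abs_lt_of_sq_lt_sq (hsq.trans_lt (hN₀ N (le_of_max_le_left hN))) hε.le

end VanDerCorput

namespace Polynomial

variable {R : Type*}

lemma hasseDeriv_eq_C_coeff [Semiring R] {P : R[X]} {k : ℕ} (h : P.natDegree ≤ k) :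
    hasseDeriv k P = C (P.coeff k) := by
  ext j
  rw [hasseDeriv_coeff, coeff_C]
  rcases Nat.eq_zero_or_pos j with rfl | hj
  · simp
  · rw [if_neg hj.ne', coeff_eq_zero_of_natDegree_lt (by omega), mul_zero]

variable [CommRing R]

lemma natDegree_taylor_sub_le {P : R[X]} {m : ℕ} (h : P.natDegree ≤ m + 1) (c : R) :
    (taylor c P - P).natDegree ≤ m := by
  rw [natDegree_le_iff_coeff_eq_zero]
  intro k hk
  rw [coeff_sub, taylor_coeff, hasseDeriv_eq_C_coeff (h.trans (Nat.cast_lt.1 hk)), eval_C,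
    sub_self]

lemma coeff_taylor_sub {P : R[X]} {m : ℕ} (h : P.natDegree ≤ m + 1) (c : R) :
    (taylor c P - P).coeff m = (m + 1) * c * P.coeff (m + 1) := by
  have hlin : (hasseDeriv m P).natDegree ≤ 1 := by
    have := natDegree_hasseDeriv_le P m
    omega
  rw [coeff_sub, taylor_coeff, eq_X_add_C_of_natDegree_le_one hlin]
  simp only [hasseDeriv_coeff, eval_add, eval_mul, eval_C, eval_X, zero_add, Nat.choose_self,
    Nat.cast_one, one_mul, add_comm 1 m, Nat.choose_succ_self_right]
  push_cast
  ring

end Polynomial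

open Polynomial

theorem hasZeroMean_expTwoPiI_eval_of_irrational_coeff {D : ℕ} (hD : 1 ≤ D) {P : ℝ[X]}
    (hdeg : P.natDegree ≤ D) (hirr : Irrational (P.coeff D)) :
    HasZeroMean fun n => expTwoPiI (P.eval (n : ℝ)) := by
  induction D, hD using Nat.le_induction generalizing P with
  | base =>
    have heval : ∀ x, P.eval x = P.coeff 1 * x + P.coeff 0 := fun x => by
      rw [eq_X_add_C_of_natDegree_le_one hdeg]
      simp
    simpa only [heval] using hasZeroMean_expTwoPiI_linear hirr (P.coeff 0)
  | succ m _ ih =>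
    refine hasZeroMean_of_hasZeroMean_correlations (fun n => (norm_expTwoPiI _).le) fun k hk => ?_
    have hdiff : ∀ n : ℕ, expTwoPiI (P.eval ((n + k : ℕ) : ℝ)) * conj (expTwoPiI (P.eval (n : ℝ)))
        = expTwoPiI ((taylor (k : ℝ) P - P).eval (n : ℝ)) := fun n => by
      rw [conj_expTwoPiI, ← expTwoPiI_add, eval_sub, taylor_eval]
      push_cast
      ring_nf
    have hcoeff : Irrational ((taylor (k : ℝ) P - P).coeff m) := by
      rw [coeff_taylor_sub hdeg, mul_assoc, ← Nat.cast_add_one]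
      exact (hirr.natCast_mul hk.ne').natCast_mul m.succ_ne_zero
    simpa only [hdiff] using ih (natDegree_taylor_sub_le hdeg k) hcoeff

lemma sum_range_mul_eq_sum_sum_residue {M : Type*} [AddCommMonoid M] (f : ℕ → M) (q K : ℕ) :
    ∑ n ∈ range (q * K), f n = ∑ r ∈ range q, ∑ m ∈ range K, f (q * m + r) := by
  induction K with
  | zero => simp
  | succ K ih => simp only [Nat.mul_succ, sum_range_add, ih, sum_range_succ, sum_add_distrib]

theorem hasZeroMean_of_residue_classes {u : ℕ → ℂ} (hu : ∀ n, ‖u n‖ ≤ 1) {q : ℕ} (hq : 0 < q)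
    (h : ∀ r < q, HasZeroMean fun m => u (q * m + r)) : HasZeroMean u := by
  rw [hasZeroMean_iff_norm]
  have hclasses : Tendsto (fun N : ℕ => ∑ r ∈ range q,
      ‖∑ m ∈ range (N / q), u (q * m + r)‖ / (N / q : ℕ) + q / (N : ℝ)) atTop (𝓝 0) := by
    have hdiv : Tendsto (· / q) atTop atTop := (map_div_atTop_eq_nat q hq).le
    simpa using (tendsto_finsetSum (range q) fun r hr =>
      (hasZeroMean_iff_norm.1 (h r (mem_range.1 hr))).comp hdiv).add
        (tendsto_const_div_atTop_nhds_zero_nat (q : ℝ))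
  refine squeeze_zero' (.of_forall fun N => by positivity) ?_ hclasses
  filter_upwards [eventually_ge_atTop q] with N hN
  have hK : (0 : ℝ) < (N / q : ℕ) := by exact_mod_cast Nat.div_pos hN hq
  have hKN : ((N / q : ℕ) : ℝ) ≤ N := by exact_mod_cast Nat.div_le_self N q
  have hsplit : ∑ n ∈ range N, u n = ∑ r ∈ range q, ∑ m ∈ range (N / q), u (q * m + r) +
      ∑ i ∈ range (N % q), u (q * (N / q) + i) := by
    conv_lhs => rw [← Nat.div_add_mod N q]
    rw [sum_range_add, sum_range_mul_eq_sum_sum_residue]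
  have htail : ‖∑ i ∈ range (N % q), u (q * (N / q) + i)‖ ≤ q := by
    refine (norm_sum_le_card_of_norm_le_one (fun i => hu _) _).trans ?_
    exact_mod_cast (card_range _).trans_le (Nat.mod_lt N hq).le
  calc ‖∑ n ∈ range N, u n‖ / N
      ≤ (∑ r ∈ range q, ‖∑ m ∈ range (N / q), u (q * m + r)‖ + q) / N := by
        gcongr
        rw [hsplit]
        exact (norm_add_le _ _).trans (add_le_add (norm_sum_le _ _) htail)
    _ ≤ _ := by
        rw [add_div, sum_div]
        gcongr

theorem hasZeroMean_expTwoPiI_rat_mul_pow_add_eval (x : ℚ) (j : ℕ) {D : ℕ} (hD : 1 ≤ D)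
    {Q : ℝ[X]} (hdeg : Q.natDegree ≤ D) (hirr : Irrational (Q.coeff D)) :
    HasZeroMean fun n => expTwoPiI (x * (n : ℝ) ^ j + Q.eval (n : ℝ)) := by
  have hq : (x.den : ℝ) ≠ 0 := by positivity
  refine hasZeroMean_of_residue_classes (fun n => (norm_expTwoPiI _).le) x.pos fun r _ => ?_
  set L : ℝ[X] := C (x.den : ℝ) * X + C (r : ℝ)
  have hL : L.natDegree = 1 := natDegree_linear hq
  have hQD : Q.natDegree = D := natDegree_eq_of_le_of_coeff_ne_zero hdeg hirr.ne_zero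
  have hcomp : Irrational ((Q.comp L).coeff D) := by
    have := coeff_comp_degree_mul_degree (p := Q) (hL ▸ one_ne_zero)
    rw [hL, mul_one, hQD, leadingCoeff_linear hq, leadingCoeff, hQD] at this
    rw [this, ← Nat.cast_pow]
    exact hirr.mul_natCast (pow_ne_zero _ x.pos.ne')
  have hshift : ∀ m : ℕ, ∃ s : ℤ,
      (x : ℝ) * ((x.den * m + r : ℕ) : ℝ) ^ j = x * (r : ℝ) ^ j + s := by
    intro m
    have hdvd : (x.den : ℤ) ∣ ((x.den * m + r : ℕ) : ℤ) ^ j - (r : ℤ) ^ j := by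
      refine (Dvd.intro (m : ℤ) ?_).trans (sub_dvd_pow_sub_pow _ _ j)
      push_cast
      ring
    obtain ⟨s, hs⟩ := hdvd
    have hs' : ((x.den : ℝ) * m + r) ^ j - (r : ℝ) ^ j = x.den * s := by exact_mod_cast hs
    refine ⟨x.num * s, ?_⟩
    rw [Rat.cast_def]
    field_simp
    push_cast
    linear_combination (x.num : ℝ) * hs'
  have hfactor : ∀ m : ℕ,
      expTwoPiI (x * ((x.den * m + r : ℕ) : ℝ) ^ j + Q.eval ((x.den * m + r : ℕ) : ℝ)) =
        expTwoPiI (x * (r : ℝ) ^ j) * expTwoPiI ((Q.comp L).eval (m : ℝ)) := fun m => by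
    obtain ⟨s, hs⟩ := hshift m
    rw [hs, add_right_comm, expTwoPiI_add, expTwoPiI_intCast, mul_one, expTwoPiI_add]
    simp [L, eval_comp]
  simpa only [hfactor] using (hasZeroMean_expTwoPiI_eval_of_irrational_coeff hD
    (natDegree_comp_le.trans (by rw [hL, mul_one]; exact hdeg)) hcomp).const_mul _

theorem hasZeroMean_expTwoPiI_eval {D : ℕ} (hD : 2 ≤ D) {P : ℝ[X]} (hdeg : P.natDegree ≤ D)
    (hirr : Irrational (P.coeff D) ∨ Irrational (P.coeff (D - 1))) :
    HasZeroMean fun n => expTwoPiI (P.eval (n : ℝ)) := by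
  by_cases hlead : Irrational (P.coeff D)
  · exact hasZeroMean_expTwoPiI_eval_of_irrational_coeff (by omega) hdeg hlead
  obtain ⟨x, hx⟩ : P.coeff D ∈ Set.range ((↑) : ℚ → ℝ) := not_not.1 hlead
  set Q := P - C (P.coeff D) * X ^ D
  have hQdeg : Q.natDegree ≤ D - 1 := by
    rw [natDegree_le_iff_coeff_eq_zero]
    intro k hk
    have hk : D - 1 < k := by exact_mod_cast hk
    rw [coeff_sub, coeff_C_mul_X_pow]
    split_ifs with hkD
    · rw [hkD, sub_self]
    · rw [coeff_eq_zero_of_natDegree_lt (by omega), sub_zero]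
  have hQcoeff : Q.coeff (D - 1) = P.coeff (D - 1) := by
    rw [coeff_sub, coeff_C_mul_X_pow, if_neg (by omega), sub_zero]
  have heval : ∀ y : ℝ, P.eval y = x * y ^ D + Q.eval y := fun y => by
    simp [Q, hx]
  simpa only [heval] using hasZeroMean_expTwoPiI_rat_mul_pow_add_eval x D (by omega) hQdeg
    (hQcoeff ▸ hirr.resolve_left hlead)

lemma not_hasZeroMean_one : ¬ HasZeroMean fun _ => 1 := by
  intro h
  have hone : Tendsto (fun N : ℕ => (N : ℂ)⁻¹ * ∑ _n ∈ range N, (1 : ℂ)) atTop (𝓝 1) := by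
    refine tendsto_const_nhds.congr' ?_
    filter_upwards [eventually_ge_atTop 1] with N hN
    simp [inv_mul_cancel₀ (Nat.cast_ne_zero.2 (by omega) : (N : ℂ) ≠ 0)]
  exact one_ne_zero (tendsto_nhds_unique hone h)

lemma weaklyOscillatingOfOrder_expTwoPiI_iff {φ : ℕ → ℝ} {d : ℕ} :
    WeaklyOscillatingOfOrder (fun n => expTwoPiI (φ n)) d ↔
      ∀ k ≤ d, ∀ t : ℝ, 0 ≤ t → t < 1 → HasZeroMean fun n => expTwoPiI (φ n + n ^ k * t) := by
  simp only [WeaklyOscillatingOfOrder, HasZeroMean, expTwoPiI_add]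
  simp [expTwoPiI]

lemma oscillatingOfOrder_expTwoPiI_iff {φ : ℕ → ℝ} {d : ℕ} :
    OscillatingOfOrder (fun n => expTwoPiI (φ n)) d ↔
      ∀ P : ℝ[X], P.natDegree ≤ d → HasZeroMean fun n => expTwoPiI (φ n + P.eval (n : ℝ)) := by
  simp only [OscillatingOfOrder, HasZeroMean, expTwoPiI_add]
  simp [expTwoPiI]

theorem weaklyOscillatingOfOrder_expTwoPiI_eval {d : ℕ} (hd : 2 ≤ d) {P : ℝ[X]}
    (hdeg : P.natDegree ≤ d) (hlead : Irrational (P.coeff d))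
    (hsublead : Irrational (P.coeff (d - 1))) :
    WeaklyOscillatingOfOrder (fun n => expTwoPiI (P.eval (n : ℝ))) d := by
  rw [weaklyOscillatingOfOrder_expTwoPiI_iff]
  intro k hk t _ _
  have hdeg' : (P + C t * X ^ k).natDegree ≤ d :=
    natDegree_add_le_of_degree_le hdeg ((natDegree_C_mul_X_pow_le t k).trans hk)
  have hirr : Irrational ((P + C t * X ^ k).coeff d) ∨
      Irrational ((P + C t * X ^ k).coeff (d - 1)) := by
    rcases hk.lt_or_eq with hk | rfl
    · left
      simpa [coeff_C_mul_X_pow, hk.ne'] using hlead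
    · have hk1 : k - 1 ≠ k := by omega
      right
      simpa [coeff_C_mul_X_pow, hk1] using hsublead
  simpa only [eval_add, eval_mul, eval_C, eval_pow, eval_X, mul_comm t] using
    hasZeroMean_expTwoPiI_eval hd hdeg' hirr

theorem not_oscillatingOfOrder_expTwoPiI_eval {d : ℕ} {P : ℝ[X]} (hdeg : P.natDegree ≤ d) :
    ¬ OscillatingOfOrder (fun n => expTwoPiI (P.eval (n : ℝ))) d := by
  rw [oscillatingOfOrder_expTwoPiI_iff]
  intro hosc
  have hcancel : ∀ n : ℕ, P.eval (n : ℝ) + (-P).eval (n : ℝ) = (0 : ℤ) := fun n => by simp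
  exact not_hasZeroMean_one <| by
    simpa only [hcancel, expTwoPiI_intCast] using hosc (-P) (by rwa [natDegree_neg])

theorem weakly_oscillating_not_oscillating (d : ℕ) (hd : 2 ≤ d)
    (α β : ℝ) (hα : Irrational α) (hβ : Irrational β) :
    WeaklyOscillatingOfOrder
        (fun n => Complex.exp (2 * Real.pi * Complex.I *
          ((n : ℝ) ^ d * α + (n : ℝ) ^ (d - 1) * β))) d ∧
      ¬ OscillatingOfOrder
        (fun n => Complex.exp (2 * Real.pi * Complex.I *
          ((n : ℝ) ^ d * α + (n : ℝ) ^ (d - 1) * β))) d := by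
  set P : ℝ[X] := C α * X ^ d + C β * X ^ (d - 1)
  have hP : (fun n : ℕ => Complex.exp (2 * Real.pi * Complex.I *
      ((n : ℝ) ^ d * α + (n : ℝ) ^ (d - 1) * β))) = fun n : ℕ => expTwoPiI (P.eval (n : ℝ)) := by
    funext n
    simp only [P, expTwoPiI, eval_add, eval_mul, eval_C, eval_pow, eval_X]
    push_cast
    ring_nf
  have hdeg : P.natDegree ≤ d := by
    simp only [P]
    compute_degree
  have hd1 : d - 1 ≠ d := by omega
  rw [hP]
  exact ⟨weaklyOscillatingOfOrder_expTwoPiI_eval hd hdeg (by simpa [P, hd1.symm] using hα)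
    (by simpa [P, hd1] using hβ), not_oscillatingOfOrder_expTwoPiI_eval hdeg⟩
end

section
/- Let X be a compact Hausdorff abelian topological group, let A be a continuous group automorphism of X that is quasi-unipotent of type (m,l) (A^m = I + N with N^l = 0), let b ∈ X, and let T x = A x + b. Let φ : X → ℂ be a continuous character of X and x ∈ X. Then for every p with 1 ≤ p ≤ m there exists a real polynomial P of degree at most l (depending on p, φ, x) such that φ(T^n x) = e^{2πi P(q)} for every n ≥ l of the form n = qm + p with q ∈ ℕ. -/
/-!
Put `S = T^[m]`, an affine map `S z = (1 + N) z + c`. Since `N ^ l = 0`, the binomial theorem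
gives `(1 + N) ^ q = ∑_{k < l} C(q, k) N ^ k`, and the hockey-stick identity gives
`∑_{j < q} (1 + N) ^ j = ∑_{k < l} C(q, k + 1) N ^ k`. Hence `T^[q m + p] x = S^[q] (T^[p] x)` is
a sum of terms `C(q, k) • u` with `k ≤ l` and `u` independent of `q`. Writing `φ u = e^{2πiθ}`,
`φ` sends such a term to `e^{2πiθ C(q, k)}`, and `θ C(q, k)` is a polynomial of degree `k` in `q`.
-/

open Finset Polynomial

theorem Nat.sum_range_choose_eq_choose_succ (q k : ℕ) :
    ∑ j ∈ range q, j.choose k = q.choose (k + 1) := by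
  induction q with
  | zero => simp
  | succ q ih => rw [sum_range_succ, ih, Nat.choose_succ_succ', add_comm]

section Unipotent

variable {R : Type*} [Semiring R] {N : R} {l : ℕ}

theorem one_add_pow_eq_sum_of_pow_eq_zero (hN : N ^ l = 0) (q : ℕ) :
    (1 + N) ^ q = ∑ k ∈ range l, q.choose k • N ^ k := by
  calc (1 + N) ^ q = ∑ k ∈ range (q + 1), q.choose k • N ^ k := by
        rw [add_comm, (Commute.one_right N).add_pow]
        simp [nsmul_eq_mul, Nat.cast_comm]
    _ = ∑ k ∈ range (q + 1 + l), q.choose k • N ^ k :=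
        sum_subset (range_mono (by omega)) fun k _ hk => by
          rw [Nat.choose_eq_zero_of_lt (by simpa using hk), zero_smul]
    _ = ∑ k ∈ range l, q.choose k • N ^ k :=
        (sum_subset (range_mono (by omega)) fun k _ hk => by
          rw [pow_eq_zero_of_le (by simpa using hk) hN, smul_zero]).symm

theorem sum_range_one_add_pow_eq_sum_of_pow_eq_zero (hN : N ^ l = 0) (q : ℕ) :
    ∑ j ∈ range q, (1 + N) ^ j = ∑ k ∈ range l, q.choose (k + 1) • N ^ k := by
  simp_rw [one_add_pow_eq_sum_of_pow_eq_zero hN]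
  rw [sum_comm]
  refine sum_congr rfl fun k _ => ?_
  rw [← sum_smul, Nat.sum_range_choose_eq_choose_succ]

end Unipotent

theorem AddMonoid.End.finsetSum_apply {ι M : Type*} [AddCommMonoid M] (f : ι → AddMonoid.End M)
    (s : Finset ι) (z : M) : (∑ i ∈ s, f i) z = ∑ i ∈ s, f i z :=
  AddMonoidHom.finsetSum_apply f s z

theorem iterate_eq_pow_apply_add_sum_apply {X : Type*} [AddCommMonoid X]
    (f : AddMonoid.End X) (b : X) {T : X → X} (hT : ∀ z, T z = f z + b) (n : ℕ) (z : X) :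
    T^[n] z = (f ^ n) z + (∑ j ∈ range n, f ^ j) b := by
  induction n with
  | zero => simp
  | succ n ih =>
    rw [Function.iterate_succ_apply', ih, hT, map_add, sum_range_succ', pow_zero, add_assoc]
    simp_rw [pow_succ']
    rw [← mul_sum]
    rfl

theorem iterate_eq_sum_choose_of_pow_eq_zero {X : Type*} [AddCommMonoid X] {N : AddMonoid.End X}
    {l : ℕ} (hN : N ^ l = 0) (c : X) {S : X → X} (hS : ∀ z, S z = (1 + N) z + c) (q : ℕ) (y : X) :
    S^[q] y =
      ∑ k ∈ range l, q.choose k • (N ^ k) y + ∑ k ∈ range l, q.choose (k + 1) • (N ^ k) c := by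
  rw [iterate_eq_pow_apply_add_sum_apply _ c hS, one_add_pow_eq_sum_of_pow_eq_zero hN,
    sum_range_one_add_pow_eq_sum_of_pow_eq_zero hN, AddMonoid.End.finsetSum_apply,
    AddMonoid.End.finsetSum_apply]
  rfl

theorem AddAut.nsmul_apply {X : Type*} [Add X] (A : AddAut X) (n : ℕ) (z : X) :
    (n • A) z = (⇑A)^[n] z := by
  induction n generalizing z with
  | zero => rfl
  | succ n ih => rw [succ_nsmul, Function.iterate_succ_apply]; exact ih (A z)

noncomputable def choosePoly (K : Type*) [Field K] (k : ℕ) : K[X] :=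
  (k.factorial : K)⁻¹ • descPochhammer K k

theorem choosePoly_eval_natCast {K : Type*} [Field K] [CharZero K] (k q : ℕ) :
    (choosePoly K k).eval (q : K) = q.choose k := by
  rw [choosePoly, eval_smul, smul_eq_mul, descPochhammer_eval_eq_descFactorial,
    Nat.descFactorial_eq_factorial_mul_choose, Nat.cast_mul, inv_mul_cancel_left₀]
  exact_mod_cast k.factorial_ne_zero

theorem natDegree_choosePoly_le (K : Type*) [Field K] (k : ℕ) : (choosePoly K k).natDegree ≤ k :=
  (natDegree_smul_le _ _).trans (descPochhammer_natDegree K k).le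

section Character

open Complex Real

variable {X : Type*} [AddCommMonoid X] (ψ : AddChar X ℂ)

theorem AddChar.exists_polynomial_apply_choose_nsmul (hψ : ∀ z, ‖ψ z‖ = 1) (k : ℕ) (u : X) :
    ∃ P : ℝ[X], P.natDegree ≤ k ∧
      ∀ q : ℕ, ψ (q.choose k • u) = exp (2 * π * I * P.eval (q : ℝ)) := by
  obtain ⟨θ, hθ⟩ := (norm_eq_one_iff _).1 (hψ u)
  refine ⟨C (θ / (2 * π)) * choosePoly ℝ k, (natDegree_C_mul_le _ _).trans
    (natDegree_choosePoly_le ℝ k), fun q => ?_⟩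
  rw [AddChar.map_nsmul_eq_pow, ← hθ, ← Complex.exp_nat_mul, eval_mul, eval_C,
    choosePoly_eval_natCast]
  congr 1
  push_cast
  field_simp

theorem AddChar.exists_polynomial_apply_sum_choose_nsmul (hψ : ∀ z, ‖ψ z‖ = 1) {ι : Type*}
    (s : Finset ι) (d : ι → ℕ) (D : ℕ) (hd : ∀ i ∈ s, d i ≤ D) (u : ι → X) :
    ∃ P : ℝ[X], P.natDegree ≤ D ∧
      ∀ q : ℕ, ψ (∑ i ∈ s, q.choose (d i) • u i) = exp (2 * π * I * P.eval (q : ℝ)) := by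
  induction s using Finset.cons_induction with
  | empty => exact ⟨0, by simp, fun q => by simp⟩
  | cons a s ha ih =>
    obtain ⟨Pa, hPa, hPa_eval⟩ := ψ.exists_polynomial_apply_choose_nsmul hψ (d a) (u a)
    obtain ⟨Ps, hPs, hPs_eval⟩ := ih fun i hi => hd i (mem_cons_of_mem hi)
    refine ⟨Pa + Ps, natDegree_add_le_of_degree_le (hPa.trans (hd a (mem_cons_self a s))) hPs,
      fun q => ?_⟩
    rw [sum_cons, AddChar.map_add_eq_mul, hPa_eval, hPs_eval, ← Complex.exp_add, eval_add]
    push_cast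
    ring_nf

end Character

theorem character_orbit_polynomial_quasiUnipotent_general
    {X : Type*} [AddCommGroup X]
    (m l : ℕ)
    (A : AddAut X)
    (N : AddMonoid.End X)
    (hA : ∀ x : X, (m • A) x = x + N x) (hN : N ^ l = 0)
    (b : X) (T : X → X) (hT : ∀ x : X, T x = A x + b)
    (φ : X → ℂ)
    (hφmul : ∀ x y : X, φ (x + y) = φ x * φ y)
    (hφabs : ∀ x : X, ‖φ x‖ = 1)
    (x : X) :
    ∀ p : ℕ, 1 ≤ p → p ≤ m →
      ∃ P : Polynomial ℝ, P.natDegree ≤ l ∧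
        ∀ n q : ℕ, n = q * m + p → l ≤ n →
          φ (T^[n] x) = Complex.exp (2 * Real.pi * Complex.I * (P.eval (q : ℝ))) := by
  intro p _ _
  let f : AddMonoid.End X := A.toAddMonoidHom
  set c := (∑ j ∈ range m, f ^ j) b
  set y := T^[p] x
  have hAm : ∀ z, (f ^ m) z = (1 + N) z := fun z =>
    (AddAut.nsmul_apply A m z).symm.trans (hA z)
  have hTm : ∀ z, T^[m] z = (1 + N) z + c := fun z => by
    rw [iterate_eq_pow_apply_add_sum_apply f b hT, hAm]
  have hφzero : φ 0 = 1 := by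
    have hφ0 : φ 0 ≠ 0 := norm_ne_zero_iff.1 (by rw [hφabs]; exact one_ne_zero)
    simpa [hφ0] using hφmul 0 0
  let ψ : AddChar X ℂ := ⟨φ, hφzero, hφmul⟩
  obtain ⟨P₁, hP₁, hP₁_eval⟩ := ψ.exists_polynomial_apply_sum_choose_nsmul hφabs (range l) id l
    (fun k hk => (mem_range.1 hk).le) fun k => (N ^ k) y
  obtain ⟨P₂, hP₂, hP₂_eval⟩ := ψ.exists_polynomial_apply_sum_choose_nsmul hφabs (range l)
    (· + 1) l (fun k hk => mem_range.1 hk) fun k => (N ^ k) c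
  refine ⟨P₁ + P₂, natDegree_add_le_of_degree_le hP₁ hP₂, fun n q hn _ => ?_⟩
  simp only [ψ, AddChar.coe_mk, id] at hP₁_eval hP₂_eval
  rw [hn, Function.iterate_add_apply, mul_comm, Function.iterate_mul,
    iterate_eq_sum_choose_of_pow_eq_zero hN c hTm, hφmul, hP₁_eval, hP₂_eval, ← Complex.exp_add,
    eval_add]
  push_cast
  ring_nf

theorem character_orbit_polynomial_quasiUnipotent
    {X : Type*} [AddCommGroup X] [TopologicalSpace X] [IsTopologicalAddGroup X]
    [CompactSpace X] [T2Space X]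
    (m l : ℕ) (hm : 1 ≤ m) (hl : 1 ≤ l)
    (A : AddAut X) (hAcont : Continuous A) (hAsymm : Continuous A.symm)
    (N : AddMonoid.End X)
    (hA : ∀ x : X, (m • A) x = x + N x) (hN : N ^ l = 0)
    (b : X) (T : X → X) (hT : ∀ x : X, T x = A x + b)
    (φ : X → ℂ) (hφcont : Continuous φ)
    (hφmul : ∀ x y : X, φ (x + y) = φ x * φ y)
    (hφabs : ∀ x : X, ‖φ x‖ = 1)
    (x : X) :
    ∀ p : ℕ, 1 ≤ p → p ≤ m →
      ∃ P : Polynomial ℝ, P.natDegree ≤ l ∧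
        ∀ n q : ℕ, n = q * m + p → l ≤ n →
          φ (T^[n] x) = Complex.exp (2 * Real.pi * Complex.I * (P.eval (q : ℝ))) :=
  character_orbit_polynomial_quasiUnipotent_general m l A N hA hN b T hT φ hφmul hφabs x
end

section
/- Let d ≥ 1 and let N be the (d+1)×(d+1) integer matrix with entries N(i,i+1) = 1 and all other entries 0, inducing the unipotent torus automorphism A = I + N of 𝕋^{d+1} = (ℝ/ℤ)^{d+1}. If a sequence (c_n) of complex numbers is linearly disjoint from the dynamical system (𝕋^{d+1}, A), then (c_n) is oscillating of order d. -/
open Filter Finset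

section aux

open Polynomial
open scoped fwdDiff

private lemma myFwdDiff_poly (P : Polynomial ℝ) :
    Δ_[1] (fun n : ℕ => P.eval (n : ℝ)) =
      fun n : ℕ => (P.comp (Polynomial.X + 1) - P).eval (n : ℝ) := by
  funext n
  simp only [fwdDiff, eval_sub, eval_comp, eval_add, eval_X, eval_one]
  push_cast
  ring

private lemma myDegDrop (P : Polynomial ℝ) (hP : 1 ≤ P.natDegree) :
    (P.comp (Polynomial.X + 1) - P).natDegree < P.natDegree := by
  have hP0 : P ≠ 0 := by
    intro h; rw [h] at hP; simp at hP
  have hq : ((Polynomial.X + 1 : Polynomial ℝ)).natDegree = 1 := by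
    rw [show (Polynomial.X + 1 : Polynomial ℝ) = Polynomial.X + Polynomial.C 1 by simp]
    exact natDegree_X_add_C 1
  have hnd : (P.comp (Polynomial.X + 1)).natDegree = P.natDegree := by
    rw [natDegree_comp, hq, mul_one]
  have hc0 : P.comp (Polynomial.X + 1) ≠ 0 := by
    intro h
    rw [h, natDegree_zero] at hnd
    omega
  have hlc : (P.comp (Polynomial.X + 1)).leadingCoeff = P.leadingCoeff := by
    rw [leadingCoeff_comp (by rw [hq]; norm_num)]
    have : (Polynomial.X + 1 : Polynomial ℝ).leadingCoeff = 1 := by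
      rw [show (Polynomial.X + 1 : Polynomial ℝ) = Polynomial.X + Polynomial.C 1 by simp]
      exact (monic_X_add_C 1).leadingCoeff
    rw [this, one_pow, mul_one]
  by_cases hz : P.comp (Polynomial.X + 1) - P = 0
  · rw [hz, natDegree_zero]; omega
  have hdeg : (P.comp (Polynomial.X + 1) - P).degree < P.degree := by
    have heq : (P.comp (Polynomial.X + 1)).degree = P.degree := by
      rw [degree_eq_natDegree hc0, degree_eq_natDegree hP0, hnd]
    have := degree_sub_lt heq hc0 hlc
    rwa [heq] at this
  have := natDegree_lt_natDegree hz hdeg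
  exact this

private lemma myVanish : ∀ (d : ℕ) (P : Polynomial ℝ), P.natDegree ≤ d →
    (Δ_[(1:ℕ)])^[d + 1] (fun n : ℕ => P.eval (n : ℝ)) = fun _ => 0 := by
  intro d
  induction d with
  | zero =>
    intro P hP
    obtain ⟨c, rfl⟩ := natDegree_eq_zero.mp (Nat.le_zero.mp hP)
    simp
  | succ d ih =>
    intro P hP
    rw [Function.iterate_succ_apply, myFwdDiff_poly]
    apply ih
    by_cases h1 : 1 ≤ P.natDegree
    · have := myDegDrop P h1; omega
    · obtain ⟨c, rfl⟩ := natDegree_eq_zero.mp (by omega : P.natDegree = 0)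
      simp

private lemma myZeroIter : ∀ m : ℕ, (Δ_[(1:ℕ)])^[m] (fun _ : ℕ => (0:ℝ)) = fun _ => 0 := by
  intro m
  induction m with
  | zero => rfl
  | succ m ih => rw [Function.iterate_succ_apply, fwdDiff_const]; exact ih

private lemma myNewton (d : ℕ) (P : Polynomial ℝ) (hP : P.natDegree ≤ d) (n : ℕ) :
    P.eval (n : ℝ) = ∑ k ∈ range (d + 1),
      (n.choose k : ℝ) * ((Δ_[(1:ℕ)])^[k] (fun m : ℕ => P.eval (m : ℝ)) 0) := by
  set f : ℕ → ℝ := fun m : ℕ => P.eval (m : ℝ) with hf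
  have h0 : f n = ∑ k ∈ range (n + 1), (n.choose k : ℝ) * (Δ_[(1:ℕ)])^[k] f 0 := by
    simpa [nsmul_eq_mul] using shift_eq_sum_fwdDiff_iter (1:ℕ) f n 0
  have hz : ∀ k, d + 1 ≤ k → (Δ_[(1:ℕ)])^[k] f 0 = 0 := by
    intro k hk
    have : (Δ_[(1:ℕ)])^[k] f = (Δ_[(1:ℕ)])^[k - (d+1)] ((Δ_[(1:ℕ)])^[d+1] f) := by
      rw [← Function.iterate_add_apply]
      congr 1
      omega
    rw [this, myVanish d P hP, myZeroIter]
  have key : ∀ (s : Finset ℕ), range (d+1) ⊆ s →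
      (∑ k ∈ s, (n.choose k : ℝ) * (Δ_[(1:ℕ)])^[k] f 0) =
      ∑ k ∈ range (d+1), (n.choose k : ℝ) * (Δ_[(1:ℕ)])^[k] f 0 := by
    intro s hs
    refine (Finset.sum_subset hs ?_).symm
    intro k _ hk
    rw [hz k (by simpa using hk), mul_zero]
  calc P.eval (n:ℝ) = ∑ k ∈ range (n + 1), (n.choose k : ℝ) * (Δ_[(1:ℕ)])^[k] f 0 := h0
    _ = ∑ k ∈ range (max n d + 1), (n.choose k : ℝ) * (Δ_[(1:ℕ)])^[k] f 0 := by
        refine Finset.sum_subset ?_ ?_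
        · exact Finset.range_subset_range.mpr (by have := le_max_left n d; omega)
        · intro k _ hk
          have hnk : n < k := by simp at hk; omega
          rw [Nat.choose_eq_zero_of_lt hnk]
          simp
    _ = _ := key _ (Finset.range_subset_range.mpr (by have := le_max_right n d; omega))

end aux

open scoped fwdDiff in
theorem oscillating_of_disjoint_from_unipotent_automorphism
    (d : ℕ) (hd : 1 ≤ d)
    (N : Matrix (Fin (d + 1)) (Fin (d + 1)) ℤ)
    (hN : ∀ i j : Fin (d + 1), N i j = if (j : ℕ) = (i : ℕ) + 1 then 1 else 0)
    (A : Matrix (Fin (d + 1)) (Fin (d + 1)) ℤ) (hA : A = 1 + N)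
    (Amap : (Fin (d + 1) → AddCircle (1 : ℝ)) → (Fin (d + 1) → AddCircle (1 : ℝ)))
    (hAmap : ∀ x i, Amap x i = ∑ j, A i j • x j)
    (c : ℕ → ℂ)
    (hdisj : ∀ x : Fin (d + 1) → AddCircle (1 : ℝ),
      ∀ f : (Fin (d + 1) → AddCircle (1 : ℝ)) → ℂ, Continuous f →
        Tendsto (fun Nn : ℕ =>
            (Nn : ℂ)⁻¹ * ∑ n ∈ Finset.range Nn, c n * f (Amap^[n] x))
          atTop (nhds 0)) :
    OscillatingOfOrder c d := by
  intro P hP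
  -- the Newton coefficients of P
  set a : ℕ → ℝ := fun k => (Δ_[(1:ℕ)])^[k] (fun m : ℕ => P.eval (m : ℝ)) 0 with ha
  have hPn : ∀ n : ℕ, P.eval (n : ℝ) = ∑ k ∈ range (d + 1), (n.choose k : ℝ) * a k :=
    fun n => myNewton d P hP n
  -- the real lift of the orbit
  set b : ℕ → ℕ → ℝ := fun n m =>
    ∑ k ∈ range (d + 1), (if m ≤ k then ((n.choose (k - m) : ℝ)) else 0) * a k with hb
  have hbtop : ∀ n, b n (d + 1) = 0 := by
    intro n
    apply Finset.sum_eq_zero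
    intro k hk
    have : ¬ (d + 1 ≤ k) := by simp at hk; omega
    rw [if_neg this, zero_mul]
  have hpascal : ∀ n m, b (n + 1) m = b n m + b n (m + 1) := by
    intro n m
    rw [← Finset.sum_add_distrib]
    refine Finset.sum_congr rfl fun k _ => ?_
    rw [← add_mul]
    congr 1
    by_cases h1 : m ≤ k
    · by_cases h2 : m + 1 ≤ k
      · rw [if_pos h1, if_pos h1, if_pos h2]
        obtain ⟨s, hs⟩ : ∃ s, k - m = s + 1 := ⟨k - (m+1), by omega⟩
        have hs2 : k - (m + 1) = s := by omega
        rw [hs, hs2, Nat.choose_succ_succ]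
        push_cast
        ring
      · have hkm : k = m := by omega
        subst hkm
        simp [h2]
    · rw [if_neg h1, if_neg h1, if_neg (by omega)]
      simp
  -- the point of the torus
  set x : Fin (d + 1) → AddCircle (1 : ℝ) :=
    fun i => ((b 0 (i : ℕ) : ℝ) : AddCircle (1:ℝ)) with hx
  have key : ∀ n : ℕ, Amap^[n] x = fun i : Fin (d + 1) => ((b n (i : ℕ) : ℝ) : AddCircle (1:ℝ)) := by
    intro n
    induction n with
    | zero => funext i; rfl
    | succ n ih =>
      rw [Function.iterate_succ_apply', ih]
      funext i
      rw [hAmap]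
      have step1 : ∀ j : Fin (d+1), (A i j) • (((b n (j:ℕ) : ℝ)) : AddCircle (1:ℝ))
          = ((((A i j : ℤ) : ℝ) * b n (j:ℕ) : ℝ) : AddCircle (1:ℝ)) := by
        intro j
        rw [← zsmul_eq_mul]
        exact (map_zsmul (QuotientAddGroup.mk' (AddSubgroup.zmultiples (1:ℝ))) _ _).symm
      calc (∑ j, A i j • (((b n (j:ℕ) : ℝ)) : AddCircle (1:ℝ)))
          = ∑ j, ((((A i j : ℤ) : ℝ) * b n (j:ℕ) : ℝ) : AddCircle (1:ℝ)) :=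
            Finset.sum_congr rfl fun j _ => step1 j
        _ = (((∑ j, ((A i j : ℤ) : ℝ) * b n (j:ℕ)) : ℝ) : AddCircle (1:ℝ)) :=
            (map_sum (QuotientAddGroup.mk' (AddSubgroup.zmultiples (1:ℝ))) _ _).symm
        _ = ((b (n+1) (i:ℕ) : ℝ) : AddCircle (1:ℝ)) := by
            congr 1
            have hsplit : ∀ j : Fin (d+1), ((A i j : ℤ) : ℝ)
                = (if i = j then (1:ℝ) else 0) + (if (j:ℕ) = (i:ℕ) + 1 then (1:ℝ) else 0) := by
              intro j
              rw [hA, Matrix.add_apply, Matrix.one_apply, hN]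
              split_ifs <;> norm_num
            calc (∑ j, ((A i j : ℤ) : ℝ) * b n (j:ℕ))
                = ∑ j, ((if i = j then (1:ℝ) else 0) * b n (j:ℕ)
                    + (if (j:ℕ) = (i:ℕ)+1 then (1:ℝ) else 0) * b n (j:ℕ)) := by
                  refine Finset.sum_congr rfl fun j _ => ?_
                  rw [hsplit j, add_mul]
              _ = b n (i:ℕ) + b n ((i:ℕ)+1) := by
                  rw [Finset.sum_add_distrib]
                  congr 1
                  · simp
                  · calc (∑ j : Fin (d+1),
                          (if (j:ℕ) = (i:ℕ)+1 then (1:ℝ) else 0) * b n (j:ℕ))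
                        = ∑ j : Fin (d+1), (if (j:ℕ) = (i:ℕ)+1 then b n (j:ℕ) else 0) := by
                          refine Finset.sum_congr rfl fun j _ => ?_
                          split_ifs <;> simp
                      _ = b n ((i:ℕ)+1) := by
                          rw [Fin.sum_univ_eq_sum_range
                              (fun m => if m = (i:ℕ)+1 then b n m else 0) (d+1),
                            Finset.sum_ite_eq' (range (d+1)) ((i:ℕ)+1) (b n)]
                          by_cases h : (i:ℕ) + 1 ∈ range (d+1)
                          · rw [if_pos h]
                          · rw [if_neg h]
                            have : (i:ℕ) + 1 = d + 1 := by
                              have := i.isLt; simp at h; omega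
                            rw [this, hbtop]
              _ = b (n+1) (i:ℕ) := (hpascal n _).symm
  -- the character
  set f : (Fin (d+1) → AddCircle (1:ℝ)) → ℂ :=
    fun y => ((AddCircle.toCircle (y 0) : Circle) : ℂ) with hfdef
  have hfc : Continuous f :=
    continuous_induced_dom.comp (AddCircle.continuous_toCircle.comp (continuous_apply 0))
  have hmain := hdisj x f hfc
  refine hmain.congr fun Nn => ?_
  congr 1
  refine Finset.sum_congr rfl fun n _ => ?_
  congr 1
  rw [key n]
  show ((AddCircle.toCircle ((b n ((0 : Fin (d+1)):ℕ) : ℝ) : AddCircle (1:ℝ)) : Circle) : ℂ) = _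
  have h00 : ((0 : Fin (d+1)):ℕ) = 0 := rfl
  rw [h00, AddCircle.toCircle_apply_mk, Circle.coe_exp]
  have hb0 : b n 0 = P.eval (n:ℝ) := by
    rw [hPn n]
    refine Finset.sum_congr rfl fun k _ => ?_
    simp
  rw [hb0]
  congr 1
  push_cast
  ring
end

section
/- Let d ≥ 1 and let N be the d×d integer matrix with entries N(i,i+1) = 1 and all other entries 0, inducing the unipotent torus automorphism A = I + N of 𝕋^{d} = (ℝ/ℤ)^{d}. Then for every real polynomial Q of degree at most d−1 there exist b ∈ 𝕋^{d} and b₀ ∈ ℝ such that, with T_b x = A x + b, e^{2πi n Q(n)} = e^{2πi (G(T_b^n(0)) + b₀)} for all n ∈ ℕ, where G : 𝕋^{d} → 𝕋 is the projection onto the first coordinate. -/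
open Finset

private lemma taylor_coeff_high' (P : Polynomial ℝ) (i : ℕ) (hi : P.natDegree ≤ i) :
    (Polynomial.taylor 1 P).coeff i = P.coeff i := by
  rw [Polynomial.taylor_coeff]
  have h : Polynomial.hasseDeriv i P = Polynomial.C (P.coeff i) := by
    ext k
    rw [Polynomial.hasseDeriv_coeff, Polynomial.coeff_C]
    cases k with
    | zero => simp
    | succ k =>
      have : P.coeff (k + 1 + i) = 0 :=
        Polynomial.coeff_eq_zero_of_natDegree_lt (by omega)
      simp [this]
  rw [h, Polynomial.eval_C]

private lemma newton_expansion (D : ℕ) : ∀ P : Polynomial ℝ, P.natDegree ≤ D →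
    ∃ β : ℕ → ℝ, ∀ n : ℕ, P.eval (n : ℝ) = ∑ j ∈ Finset.range (D + 1), β j * (n.choose j : ℝ) := by
  induction D with
  | zero =>
    intro P hP
    refine ⟨fun _ => P.coeff 0, fun n => ?_⟩
    rw [Finset.sum_range_one]
    conv_lhs => rw [Polynomial.eq_C_of_natDegree_le_zero hP]
    simp
  | succ D ih =>
    intro P hP
    set ΔP := Polynomial.taylor 1 P - P with hΔPdef
    have hΔ : ΔP.natDegree ≤ D := by
      rw [Polynomial.natDegree_le_iff_coeff_eq_zero]
      intro m hm
      rw [Polynomial.coeff_sub, taylor_coeff_high' P m (by omega), sub_self]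
    obtain ⟨γ, hγ⟩ := ih ΔP hΔ
    refine ⟨fun j => if j = 0 then P.eval 0 else γ (j - 1), fun n => ?_⟩
    have expand : ∀ m : ℕ,
        ∑ j ∈ Finset.range (D + 2),
          (if j = 0 then P.eval 0 else γ (j - 1)) * (m.choose j : ℝ)
        = P.eval 0 + ∑ j ∈ Finset.range (D + 1), γ j * (m.choose (j + 1) : ℝ) := by
      intro m
      rw [Finset.sum_range_succ']
      simp [add_comm]
    induction n with
    | zero =>
      rw [expand 0]
      simp
    | succ n ihn =>
      have h1 : P.eval ((n : ℝ) + 1) = P.eval (n : ℝ) + ΔP.eval (n : ℝ) := by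
        rw [hΔPdef]
        rw [Polynomial.eval_sub, Polynomial.taylor_eval]
        push_cast
        ring
      have split : ∑ j ∈ Finset.range (D + 1), γ j * ((n + 1).choose (j + 1) : ℝ)
          = ∑ j ∈ Finset.range (D + 1), γ j * (n.choose (j + 1) : ℝ)
            + ∑ j ∈ Finset.range (D + 1), γ j * (n.choose j : ℝ) := by
        rw [← Finset.sum_add_distrib]
        refine Finset.sum_congr rfl fun j _ => ?_
        rw [Nat.choose_succ_succ']
        push_cast
        ring
      push_cast
      rw [h1, ihn, hγ n, expand n, expand (n + 1), split]
      ring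

theorem polynomial_exponential_is_observable_special_affine
    (d : ℕ) (hd : 1 ≤ d)
    (N : Matrix (Fin d) (Fin d) ℤ)
    (hN : ∀ i j : Fin d, N i j = if (j : ℕ) = (i : ℕ) + 1 then 1 else 0)
    (A : Matrix (Fin d) (Fin d) ℤ) (hA : A = 1 + N)
    (Amap : (Fin d → AddCircle (1 : ℝ)) → (Fin d → AddCircle (1 : ℝ)))
    (hAmap : ∀ x i, Amap x i = ∑ j, A i j • x j) :
    ∀ Q : Polynomial ℝ, Q.natDegree ≤ d - 1 →
      ∃ (b : Fin d → AddCircle (1 : ℝ)) (b₀ : ℝ),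
        ∀ n : ℕ,
          Complex.exp (2 * Real.pi * Complex.I * ((n : ℝ) * Q.eval (n : ℝ))) =
            (AddCircle.toCircle (((fun x => Amap x + b)^[n] 0) (⟨0, hd⟩ : Fin d)) : ℂ) *
              Complex.exp (2 * Real.pi * Complex.I * b₀) := by
  intro Q hQ
  -- Newton expansion of `P = X * Q`
  set P : Polynomial ℝ := Polynomial.X * Q with hPdef
  have hP : P.natDegree ≤ d := by
    refine le_trans (Polynomial.natDegree_mul_le) ?_
    rw [Polynomial.natDegree_X]
    omega
  obtain ⟨β, hβ⟩ := newton_expansion d P hP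
  have hβ0 : β 0 = 0 := by
    have h0 := hβ 0
    rw [Finset.sum_range_succ'] at h0
    simpa [hPdef] using h0.symm
  have hPn : ∀ n : ℕ, (n : ℝ) * Q.eval (n : ℝ)
      = ∑ j ∈ Finset.range d, β (j + 1) * (n.choose (j + 1) : ℝ) := by
    intro n
    have h := hβ n
    rw [Finset.sum_range_succ'] at h
    simpa [hPdef, hβ0] using h
  set β' : ℕ → ℝ := fun j => β (j + 1) with hβ'def
  -- the affine map in coordinates
  have hAmap' : ∀ (x : Fin d → AddCircle (1 : ℝ)) (i : Fin d),
      Amap x i = x i + (if h : (i : ℕ) + 1 < d then x ⟨(i : ℕ) + 1, h⟩ else 0) := by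
    intro x i
    rw [hAmap]
    have : ∀ j : Fin d, A i j • x j
        = ((if i = j then x j else 0) + (if (j : ℕ) = (i : ℕ) + 1 then x j else 0)) := by
      intro j
      rw [hA, Matrix.add_apply, Matrix.one_apply, hN, add_smul]
      split_ifs <;> simp
    rw [Finset.sum_congr rfl fun j _ => this j, Finset.sum_add_distrib]
    congr 1
    · simp
    · by_cases h : (i : ℕ) + 1 < d
      · rw [dif_pos h, Finset.sum_eq_single (⟨(i : ℕ) + 1, h⟩ : Fin d)]
        · simp
        · intro j _ hj
          rw [if_neg]
          intro hc
          exact hj (Fin.ext hc)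
        · simp
      · rw [dif_neg h]
        apply Finset.sum_eq_zero
        intro j _
        rw [if_neg]
        intro hc
        exact h (hc ▸ j.isLt)
  set b : Fin d → AddCircle (1 : ℝ) := fun i => ((β' (i : ℕ) : ℝ) : AddCircle (1 : ℝ)) with hb
  set S : ℕ → ℕ → ℝ := fun n i => ∑ j ∈ Finset.range (d - i), (n.choose (j + 1) : ℝ) * β' (i + j)
    with hSdef
  have hSrec : ∀ n i, i < d → S (n + 1) i = S n i + S n (i + 1) + β' i := by
    intro n i hi
    have hdi : d - i = (d - (i + 1)) + 1 := by omega
    have L : ∀ m : ℕ, S m i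
        = ∑ j ∈ Finset.range (d - (i + 1)), (m.choose (j + 2) : ℝ) * β' (i + (j + 1))
          + (m.choose 1 : ℝ) * β' (i + 0) := by
      intro m
      rw [hSdef]
      dsimp only
      rw [hdi, Finset.sum_range_succ']
    have hS1 : S n (i + 1)
        = ∑ j ∈ Finset.range (d - (i + 1)), (n.choose (j + 1) : ℝ) * β' (i + (j + 1)) := by
      rw [hSdef]
      dsimp only
      refine Finset.sum_congr rfl fun j _ => ?_
      have : i + 1 + j = i + (j + 1) := by omega
      rw [this]
    have split : ∑ j ∈ Finset.range (d - (i + 1)), ((n + 1).choose (j + 2) : ℝ) * β' (i + (j + 1))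
        = ∑ j ∈ Finset.range (d - (i + 1)), (n.choose (j + 2) : ℝ) * β' (i + (j + 1))
          + ∑ j ∈ Finset.range (d - (i + 1)), (n.choose (j + 1) : ℝ) * β' (i + (j + 1)) := by
      rw [← Finset.sum_add_distrib]
      refine Finset.sum_congr rfl fun j _ => ?_
      rw [Nat.choose_succ_succ' n (j + 1)]
      push_cast
      ring
    rw [L (n + 1), L n, hS1, split]
    simp [Nat.choose_one_right]
    push_cast
    ring
  have hS : ∀ n (i : Fin d),
      ((fun x => Amap x + b)^[n] 0) i = ((S n (i : ℕ) : ℝ) : AddCircle (1 : ℝ)) := by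
    intro n
    induction n with
    | zero => intro i; simp [hSdef]
    | succ n ihn =>
      intro i
      rw [Function.iterate_succ_apply']
      show Amap ((fun x => Amap x + b)^[n] 0) i + b i = _
      rw [hAmap', ihn i]
      by_cases h : (i : ℕ) + 1 < d
      · rw [dif_pos h, ihn ⟨(i : ℕ) + 1, h⟩]
        rw [hSrec n i i.isLt]
        rw [QuotientAddGroup.mk_add, QuotientAddGroup.mk_add]
      · rw [dif_neg h]
        rw [hSrec n i i.isLt]
        have h0 : S n ((i : ℕ) + 1) = 0 := by
          rw [hSdef]
          dsimp only
          rw [Nat.sub_eq_zero_of_le (by omega), Finset.sum_range_zero]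
        rw [h0, add_zero]
        rw [QuotientAddGroup.mk_add, add_zero]
  refine ⟨b, 0, fun n => ?_⟩
  have hS0 : S n 0 = (n : ℝ) * Q.eval (n : ℝ) := by
    rw [hSdef, hPn n]
    dsimp only
    rw [Nat.sub_zero]
    refine Finset.sum_congr rfl fun j _ => ?_
    rw [hβ'def]
    dsimp only
    rw [Nat.zero_add, mul_comm]
  rw [hS n ⟨0, hd⟩]
  show _ = (AddCircle.toCircle ((S n ((0 : ℕ)) : ℝ) : AddCircle (1 : ℝ)) : ℂ) * _
  rw [AddCircle.toCircle_apply_mk, Circle.coe_exp, hS0]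
  rw [Complex.ofReal_zero, mul_zero, Complex.exp_zero, mul_one]
  congr 1
  push_cast
  ring
end

section
/- Let d ≥ 1 and let N be the d×d integer matrix with entries N(i,i+1) = 1 and all other entries 0, inducing the unipotent torus automorphism A = I + N of 𝕋^{d} = (ℝ/ℤ)^{d}. If a sequence (c_n) of complex numbers is linearly disjoint from the dynamical system (𝕋^{d}, T_b) for every b ∈ 𝕋^{d}, where T_b x = A x + b, then (c_n) is oscillating of order d. -/
/-!
For `P` of degree at most `d`, the forward differences satisfy
`Δⁱ P (n + 1) = Δⁱ P n + Δⁱ⁺¹ P n` and `Δᵈ P` is constant, so the table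
`(Δⁱ P n mod 1)_{i < d}` moves from `n` to `n + 1` under the affine map
`y ↦ (I + N) y + Δᵈ P · e_{d-1}`. Thus `e(P(n))` is the continuous function `y ↦ e(y₀)` read along
an orbit of some `T_b`, and disjointness from `T_b` is exactly oscillation against `P`.
-/

open Filter Finset

section fwdDiff

variable {M G G' : Type*} [AddCommMonoid M] [AddCommGroup G] [AddCommGroup G'] (h : M)

theorem fwdDiff_iter_comp_addMonoidHom (φ : G →+ G') (u : M → G) (k : ℕ) :
    (fwdDiff h)^[k] (φ ∘ u) = φ ∘ (fwdDiff h)^[k] u := by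
  induction k with
  | zero => rfl
  | succ k ih =>
    ext m
    simp only [Function.iterate_succ_apply', ih, fwdDiff, Function.comp_apply, map_sub]

theorem Polynomial.fwdDiff_iter_comp_eval_eq_zero {R : Type*} [CommRing R] (φ : R →+ G)
    {P : Polynomial R} {d : ℕ} (hP : P.natDegree ≤ d) :
    (fwdDiff 1)^[d + 1] (φ ∘ P.eval) = 0 := by
  rw [fwdDiff_iter_comp_addMonoidHom, fwdDiff_iter_eq_zero_of_degree_lt (Nat.lt_succ_of_le hP)]
  ext
  exact map_zero φ

theorem apply_add_nsmul_eq_of_fwdDiff_eq_zero {u : M → G} (hu : fwdDiff h u = 0) (m : M) (n : ℕ) :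
    u (m + n • h) = u m := by
  induction n with
  | zero => rw [zero_nsmul, add_zero]
  | succ n ih =>
    rw [succ_nsmul, ← add_assoc, ← ih, ← sub_eq_zero]
    exact congrFun hu (m + n • h)

end fwdDiff

section DiffTable

variable {M G : Type*} [AddCommMonoid M] [AddCommGroup G] {d : ℕ}

def diffTable (d : ℕ) (h : M) (u : M → G) (m : M) : Fin d → G := fun i => (fwdDiff h)^[i] u m

def diffTableStep (β : G) (y : Fin d → G) : Fin d → G :=
  fun i => y i + if hi : (i : ℕ) + 1 < d then y ⟨i + 1, hi⟩ else β

theorem diffTableStep_diffTable (h : M) (u : M → G) (m : M) :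
    diffTableStep ((fwdDiff h)^[d] u m) (diffTable d h u m) = diffTable d h u (m + h) := by
  ext i
  have hsucc : (fwdDiff h)^[i] u (m + h) = (fwdDiff h)^[i] u m + (fwdDiff h)^[i + 1] u m := by
    rw [Function.iterate_succ_apply', fwdDiff, add_sub_cancel]
  rw [diffTableStep, diffTable, diffTable, hsucc]
  split_ifs with hi
  · rfl
  · rw [show (i : ℕ) + 1 = d by omega]

theorem iterate_diffTableStep_diffTable {h : M} {u : M → G} (hu : (fwdDiff h)^[d + 1] u = 0)
    (m : M) (n : ℕ) :
    (diffTableStep ((fwdDiff h)^[d] u m))^[n] (diffTable d h u m) = diffTable d h u (m + n • h) := by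
  induction n with
  | zero => rw [zero_nsmul, add_zero]; rfl
  | succ n ih =>
    have hconst : (fwdDiff h)^[d] u (m + n • h) = (fwdDiff h)^[d] u m := by
      refine apply_add_nsmul_eq_of_fwdDiff_eq_zero h ?_ m n
      rwa [← Function.iterate_succ_apply' (fwdDiff h)]
    rw [Function.iterate_succ_apply', ih, ← hconst, diffTableStep_diffTable, succ_nsmul, add_assoc]

end DiffTable

theorem sum_superdiagonal_smul {G : Type*} [AddCommGroup G] {d : ℕ}
    {N : Matrix (Fin d) (Fin d) ℤ}
    (hN : ∀ i j : Fin d, N i j = if (j : ℕ) = (i : ℕ) + 1 then 1 else 0)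
    (y : Fin d → G) (i : Fin d) :
    ∑ j, N i j • y j = if hi : (i : ℕ) + 1 < d then y ⟨i + 1, hi⟩ else 0 := by
  simp only [hN, ite_smul, one_smul, zero_smul]
  split_ifs with hi
  · have hj : ∀ j : Fin d, (j : ℕ) = i + 1 ↔ j = ⟨i + 1, hi⟩ := fun j =>
      (Fin.ext_iff (b := ⟨i + 1, hi⟩)).symm
    simp_rw [hj, sum_ite_eq', mem_univ, if_true]
  · exact sum_eq_zero fun j _ => if_neg (by omega)

theorem affine_superdiagonal_eq_diffTableStep {G : Type*} [AddCommGroup G] {d : ℕ}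
    {N A : Matrix (Fin d) (Fin d) ℤ}
    (hN : ∀ i j : Fin d, N i j = if (j : ℕ) = (i : ℕ) + 1 then 1 else 0) (hA : A = 1 + N)
    {Amap : (Fin d → G) → (Fin d → G)} (hAmap : ∀ x i, Amap x i = ∑ j, A i j • x j) (β : G) :
    (fun z => Amap z + fun i : Fin d => if (i : ℕ) + 1 = d then β else 0) = diffTableStep β := by
  ext z i
  simp only [Pi.add_apply, hAmap, hA, Matrix.add_apply, add_smul, sum_add_distrib,
    sum_superdiagonal_smul hN, Matrix.one_apply, ite_smul, one_smul, zero_smul, sum_ite_eq,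
    mem_univ, if_true, diffTableStep]
  by_cases hi : (i : ℕ) + 1 < d
  · simp [hi, show (i : ℕ) + 1 ≠ d by omega]
  · simp [show (i : ℕ) + 1 = d by omega]

theorem oscillating_of_disjoint_from_special_affine_maps
    (d : ℕ) (hd : 1 ≤ d)
    (N : Matrix (Fin d) (Fin d) ℤ)
    (hN : ∀ i j : Fin d, N i j = if (j : ℕ) = (i : ℕ) + 1 then 1 else 0)
    (A : Matrix (Fin d) (Fin d) ℤ) (hA : A = 1 + N)
    (Amap : (Fin d → AddCircle (1 : ℝ)) → (Fin d → AddCircle (1 : ℝ)))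
    (hAmap : ∀ x i, Amap x i = ∑ j, A i j • x j)
    (c : ℕ → ℂ)
    (hdisj : ∀ b : Fin d → AddCircle (1 : ℝ),
      ∀ x : Fin d → AddCircle (1 : ℝ),
        ∀ f : (Fin d → AddCircle (1 : ℝ)) → ℂ, Continuous f →
          Tendsto (fun Nn : ℕ =>
              (Nn : ℂ)⁻¹ * ∑ n ∈ Finset.range Nn,
                c n * f ((fun z => Amap z + b)^[n] x))
            atTop (nhds 0)) :
    OscillatingOfOrder c d := by
  intro P hP
  set u : ℝ → AddCircle (1 : ℝ) := QuotientAddGroup.mk' _ ∘ P.eval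
  have hu : (fwdDiff 1)^[d + 1] u = 0 := Polynomial.fwdDiff_iter_comp_eval_eq_zero _ hP
  have hf : Continuous fun z : Fin d → AddCircle (1 : ℝ) => fourier 1 (z ⟨0, hd⟩) :=
    (fourier 1).continuous.comp (continuous_apply _)
  have hlim := hdisj (fun i => if (i : ℕ) + 1 = d then (fwdDiff 1)^[d] u 0 else 0)
    (diffTable d 1 u 0) _ hf
  rw [affine_superdiagonal_eq_diffTableStep hN hA hAmap] at hlim
  refine hlim.congr fun Nn => congrArg _ (sum_congr rfl fun n _ => ?_)
  rw [iterate_diffTableStep_diffTable hu, zero_add, nsmul_one]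
  change c n * fourier 1 ((P.eval (n : ℝ) : ℝ) : AddCircle (1 : ℝ)) = _
  rw [fourier_coe_apply, Int.cast_one, mul_one, Complex.ofReal_one, div_one]
end

section
/- If a sequence (c_n) of complex numbers is linearly disjoint from every topological dynamical system of zero topological entropy (i.e. from every pair (X,T) with X a compact metric space and T : X → X continuous of zero topological entropy), then (c_n) is fully oscillating. -/
/-!
The unipotent skew product `S (x₀, x₁, …, x_d) = (x₀, x₁ + x₀, …, x_d + x_{d-1})` on the torus
`𝕋^{d+1}` has zero topological entropy: its `n`-th iterate is `(n+1)^d`-Lipschitz, so a grid of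
mesh `ε / (n+1)^d`, which has polynomially many points in `n`, is an `(ε, n)`-dynamical cover.
Started at the point whose `j`-th coordinate is the iterated forward difference `Δ^{d-j} P (0)`,
the last coordinate of `Sⁿ x` is `P(n) mod 1`, so disjointness from `S` applied to the observable
`x ↦ e(x_d)` is exactly oscillation against `e(P(n))`.
-/

open Filter Finset

/-- A sequence is fully oscillating if it is oscillating of every order `d ≥ 1`. -/
def FullyOscillating (c : ℕ → ℂ) : Prop :=
  ∀ d : ℕ, 1 ≤ d → OscillatingOfOrder c d

open ExpGrowth fwdDiff Polynomial Set
open scoped ENNReal NNReal Topology Uniformity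

theorem ExpGrowth.expGrowthSup_natCast_add_one_pow (k : ℕ) :
    expGrowthSup (fun n : ℕ ↦ ((n : ℝ≥0∞) + 1) ^ k) = 0 := by
  have hlog : Tendsto (fun n : ℕ ↦ k * (Real.log (n + 1) / n)) atTop (𝓝 0) := by
    have := (Real.tendsto_pow_log_div_mul_add_atTop 1 (-1) 1 one_ne_zero).comp
      (tendsto_atTop_add_const_right atTop 1 tendsto_natCast_atTop_atTop)
    simpa using this.const_mul (k : ℝ)
  refine Tendsto.limsup_eq ?_
  rw [← EReal.coe_zero]
  convert EReal.tendsto_coe.2 hlog using 1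
  ext n
  rw [ENNReal.log_pow, ← ENNReal.ofReal_natCast, ← ENNReal.ofReal_one,
    ← ENNReal.ofReal_add (by positivity) zero_le_one, ENNReal.log_ofReal_of_pos (by positivity)]
  simp [EReal.coe_mul, EReal.coe_div, mul_div_assoc]

theorem ExpGrowth.expGrowthSup_le_zero_of_le_mul_pow {u : ℕ → ℝ≥0∞} {C : ℝ≥0∞} (hC : C ≠ ∞)
    {k : ℕ} (h : ∀ n, u n ≤ C * ((n : ℝ≥0∞) + 1) ^ k) : expGrowthSup u ≤ 0 :=
  (expGrowthSup_le_of_eventually_le hC (Eventually.of_forall h)).trans_eq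
    (expGrowthSup_natCast_add_one_pow k)

namespace Dynamics

theorem coverEntropy_eq_zero_of_coverMincard_le_mul_pow {X : Type*} [UniformSpace X] [Nonempty X]
    (T : X → X) (h : ∀ U ∈ 𝓤 X, ∃ C k : ℕ, ∀ n : ℕ, coverMincard T univ U n ≤ C * (n + 1) ^ k) :
    coverEntropy T univ = 0 := by
  refine le_antisymm (iSup₂_le fun U hU ↦ ?_) (coverEntropy_nonneg T univ_nonempty)
  obtain ⟨C, k, hCk⟩ := h U hU
  refine expGrowthSup_le_zero_of_le_mul_pow (k := k) (ENNReal.natCast_ne_top C) fun n ↦ ?_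
  simpa using ENat.toENNReal_le.2 (hCk n)

theorem isDynCoverOf_univ_of_lipschitzWith {X : Type*} [PseudoMetricSpace X] {T : X → X} {n : ℕ}
    {K : ℝ≥0} (hT : ∀ k < n, LipschitzWith K T^[k]) {s : Finset X} {δ : ℝ}
    (hs : ∀ x, ∃ y ∈ s, dist x y ≤ δ) :
    IsDynCoverOf T univ {p | dist p.1 p.2 ≤ K * δ} n s := by
  intro x _
  obtain ⟨y, hys, hxy⟩ := hs x
  exact ⟨y, hys, mem_dynEntourage.2 fun k hk ↦ ((hT k hk).dist_le_mul x y).trans (by gcongr)⟩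

theorem coverEntropy_eq_zero_of_lipschitzWith_pow {X : Type*} [PseudoMetricSpace X] [Nonempty X]
    (T : X → X) {a b : ℕ} (hT : ∀ n : ℕ, LipschitzWith ((n + 1) ^ a) T^[n])
    (hX : ∀ m : ℕ, 0 < m → ∃ s : Finset X, s.card ≤ m ^ b ∧ ∀ x, ∃ y ∈ s, dist x y ≤ 1 / m) :
    coverEntropy T univ = 0 := by
  refine coverEntropy_eq_zero_of_coverMincard_le_mul_pow T fun U hU ↦ ?_
  obtain ⟨ε, hε, hεU⟩ := Metric.mem_uniformity_dist.1 hU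
  obtain ⟨B, hB⟩ := exists_nat_gt ε⁻¹
  have hB₀ : 0 < B := by exact_mod_cast (inv_pos.2 hε).trans hB
  refine ⟨B ^ b, a * b, fun n ↦ ?_⟩
  obtain ⟨s, hs_card, hs⟩ := hX (B * (n + 1) ^ a) (by positivity)
  have hcover : IsDynCoverOf T univ U n s := by
    refine (isDynCoverOf_univ_of_lipschitzWith (K := (n + 1) ^ a)
      (fun k hk ↦ (hT k).weaken (by gcongr)) hs).of_entourage_subset
      fun p hp ↦ hεU (lt_of_le_of_lt hp ?_)
    calc ((n + 1 : ℝ≥0) ^ a : ℝ) * (1 / ((B * (n + 1) ^ a : ℕ) : ℝ)) = (B : ℝ)⁻¹ := by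
          push_cast; field_simp
      _ < ε := inv_lt_of_inv_lt₀ hε hB
  calc coverMincard T univ U n ≤ s.card := hcover.coverMincard_le_card
    _ ≤ ((B * (n + 1) ^ a) ^ b : ℕ) := by exact_mod_cast hs_card
    _ = B ^ b * (n + 1) ^ (a * b) := by push_cast; ring

end Dynamics

theorem AddCircle.exists_finset_card_le_forall_dist_le {m : ℕ} (hm : 0 < m) :
    ∃ s : Finset (AddCircle (1 : ℝ)), s.card ≤ m ∧ ∀ x, ∃ y ∈ s, dist x y ≤ 1 / m := by
  refine ⟨(range m).image fun k : ℕ ↦ ((k / m : ℝ) : AddCircle (1 : ℝ)),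
    card_image_le.trans (card_range m).le, fun x ↦ ?_⟩
  obtain ⟨t, rfl⟩ := QuotientAddGroup.mk_surjective x
  have hm' : (0 : ℝ) < m := by exact_mod_cast hm
  set b := Int.fract t
  have hb : 0 ≤ b * m := mul_nonneg (Int.fract_nonneg t) hm'.le
  refine ⟨((⌊b * m⌋₊ / m : ℝ) : AddCircle (1 : ℝ)), mem_image_of_mem _ (mem_range.2 ?_), ?_⟩
  · exact (Nat.floor_lt hb).2 (by nlinarith [Int.fract_lt_one t])
  · rw [← AddCircle.coe_fract, dist_eq_norm, ← AddCircle.coe_sub]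
    refine QuotientAddGroup.norm_mk_le_norm.trans ?_
    have hdiff : b - ⌊b * m⌋₊ / m = (b * m - ⌊b * m⌋₊) / m := by field_simp
    rw [Real.norm_eq_abs, hdiff, abs_div, abs_of_pos hm', div_le_div_iff_of_pos_right hm', abs_le]
    constructor <;> linarith [Nat.floor_le hb, Nat.lt_floor_add_one (b * m)]

theorem exists_finset_pi_card_le_forall_dist_le {ι α : Type*} [Fintype ι] [PseudoMetricSpace α]
    {N : ℕ} {δ : ℝ} (hδ : 0 ≤ δ) (h : ∃ s : Finset α, s.card ≤ N ∧ ∀ x, ∃ y ∈ s, dist x y ≤ δ) :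
    ∃ s : Finset (ι → α), s.card ≤ N ^ Fintype.card ι ∧ ∀ x, ∃ y ∈ s, dist x y ≤ δ := by
  classical
  obtain ⟨s, hs_card, hs⟩ := h
  refine ⟨Fintype.piFinset fun _ ↦ s, ?_, fun x ↦ ?_⟩
  · rw [Fintype.card_piFinset, prod_const, card_univ]
    exact Nat.pow_le_pow_left hs_card _
  · choose y hys hy using fun i ↦ hs (x i)
    exact ⟨y, Fintype.mem_piFinset.2 hys, (dist_pi_le_iff hδ).2 hy⟩

theorem Polynomial.fwdDiff_iter_comp_eval_natCast_eq_zero {R G : Type*} [CommRing R]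
    [AddCommGroup G] (φ : R →+ G) (P : R[X]) {n : ℕ} (hP : P.natDegree < n) :
    Δ_[1] ^[n] (fun m : ℕ ↦ φ (P.eval (m : R))) = 0 := by
  ext m
  have h := congrArg φ (congrFun (P.fwdDiff_iter_eq_zero_of_degree_lt hP) m)
  rw [fwdDiff_iter_eq_sum_shift, map_sum, Pi.zero_apply, map_zero] at h
  simpa only [fwdDiff_iter_eq_sum_shift, map_zsmul, nsmul_one, Nat.cast_add, Nat.cast_id,
    Pi.zero_apply] using h

section SkewShift

variable {G : Type*} {d : ℕ}

def skewShift [Add G] (d : ℕ) (x : Fin (d + 1) → G) : Fin (d + 1) → G :=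
  Fin.cons (x 0) fun i ↦ x i.succ + x i.castSucc

@[simp]
theorem skewShift_zero [Add G] (x : Fin (d + 1) → G) : skewShift d x 0 = x 0 := rfl

@[simp]
theorem skewShift_succ [Add G] (x : Fin (d + 1) → G) (i : Fin d) :
    skewShift d x i.succ = x i.succ + x i.castSucc := rfl

theorem dist_skewShift_iterate_apply_le [SeminormedAddCommGroup G] (n : ℕ)
    (x y : Fin (d + 1) → G) (j : Fin (d + 1)) :
    dist ((skewShift d)^[n] x j) ((skewShift d)^[n] y j) ≤ (n + 1) ^ (j : ℕ) * dist x y := by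
  induction n generalizing j with
  | zero => simpa using dist_le_pi_dist x y j
  | succ n ih =>
    simp only [Function.iterate_succ_apply']
    induction j using Fin.cases with
    | zero => simpa using ih 0
    | succ i =>
      have hpow : ((n : ℝ) + 1) ^ (i + 1 : ℕ) + (n + 1) ^ (i : ℕ) ≤ (n + 1 + 1) ^ (i + 1 : ℕ) :=
        calc ((n : ℝ) + 1) ^ (i + 1 : ℕ) + (n + 1) ^ (i : ℕ)
            = (n + 1) ^ (i : ℕ) * (n + 1 + 1) := by ring
          _ ≤ (n + 1 + 1) ^ (i : ℕ) * (n + 1 + 1) := by gcongr; linarith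
          _ = (n + 1 + 1) ^ (i + 1 : ℕ) := (pow_succ _ _).symm
      calc _ ≤ _ := dist_add_add_le _ _ _ _
        _ ≤ (n + 1) ^ (i + 1 : ℕ) * dist x y + (n + 1) ^ (i : ℕ) * dist x y := by
            simpa using add_le_add (ih i.succ) (ih i.castSucc)
        _ ≤ _ := by rw [← add_mul, Fin.val_succ]; push_cast; gcongr

theorem lipschitzWith_skewShift_iterate [SeminormedAddCommGroup G] (n : ℕ) :
    LipschitzWith ((n + 1) ^ d) (skewShift (G := G) d)^[n] := by
  refine .of_dist_le_mul fun x y ↦ (dist_pi_le_iff (by positivity)).2 fun j ↦ ?_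
  refine (dist_skewShift_iterate_apply_le n x y j).trans ?_
  push_cast
  gcongr
  · linarith
  · exact Fin.is_le j

theorem skewShift_iterate_apply_fwdDiff [AddCommGroup G] {f : ℕ → G}
    (hf : Δ_[1] ^[d + 1] f = 0) (n : ℕ) (j : Fin (d + 1)) :
    (skewShift d)^[n] (fun j ↦ Δ_[1] ^[d - j] f 0) j = Δ_[1] ^[d - j] f n := by
  induction n generalizing j with
  | zero => rfl
  | succ n ih =>
    rw [Function.iterate_succ_apply']
    induction j using Fin.cases with
    | zero =>
      have h := congrFun hf n
      rw [Function.iterate_succ_apply', fwdDiff, Pi.zero_apply, sub_eq_zero] at h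
      simpa [ih] using h.symm
    | succ i =>
      have hd : d - i = d - (i + 1) + 1 := by omega
      simp only [skewShift_succ, ih, Fin.val_succ, Fin.val_castSucc, hd,
        Function.iterate_succ_apply', fwdDiff]
      abel

theorem Dynamics.coverEntropy_skewShift_addCircle (d : ℕ) :
    Dynamics.coverEntropy (skewShift (G := AddCircle (1 : ℝ)) d) univ = 0 :=
  Dynamics.coverEntropy_eq_zero_of_lipschitzWith_pow _ lipschitzWith_skewShift_iterate
    fun _ hm ↦ exists_finset_pi_card_le_forall_dist_le (by positivity)
      (AddCircle.exists_finset_card_le_forall_dist_le hm)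

end SkewShift

theorem fullyOscillating_of_disjoint_from_all_zero_entropy_systems (c : ℕ → ℂ)
    (hdisj : ∀ (X : Type) [MetricSpace X] [CompactSpace X],
      ∀ T : X → X, Continuous T →
        Dynamics.coverEntropy T Set.univ = 0 →
        ∀ x : X, ∀ f : X → ℂ, Continuous f →
          Tendsto (fun Nn : ℕ =>
              (Nn : ℂ)⁻¹ * ∑ n ∈ Finset.range Nn, c n * f (T^[n] x))
            atTop (nhds 0)) :
    FullyOscillating c := by
  intro d _ P hP
  set f : ℕ → AddCircle (1 : ℝ) := fun n ↦ (P.eval (n : ℝ) : ℝ)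
  have hf : Δ_[1] ^[d + 1] f = 0 :=
    P.fwdDiff_iter_comp_eval_natCast_eq_zero (QuotientAddGroup.mk' _) (by omega)
  have hS : Continuous (skewShift (G := AddCircle (1 : ℝ)) d) :=
    Function.iterate_one (skewShift (G := AddCircle (1 : ℝ)) d) ▸
      (lipschitzWith_skewShift_iterate 1).continuous
  have hobs :
      Continuous fun x : Fin (d + 1) → AddCircle (1 : ℝ) ↦ ((x (Fin.last d)).toCircle : ℂ) :=
    continuous_subtype_val.comp (AddCircle.continuous_toCircle.comp (continuous_apply _))
  refine (hdisj _ _ hS (Dynamics.coverEntropy_skewShift_addCircle d)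
    (fun j ↦ Δ_[1] ^[d - j] f 0) _ hobs).congr fun N ↦ ?_
  refine congrArg _ (sum_congr rfl fun n _ ↦ congrArg (c n * ·) ?_)
  rw [skewShift_iterate_apply_fwdDiff hf, Fin.val_last, Nat.sub_self, Function.iterate_zero_apply,
    AddCircle.toCircle_apply_mk, Circle.coe_exp]
  push_cast
  congr 1
  ring
end
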